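/- arXiv:1312.5681 — 8 statements merged into one kernel-verified Lean document; each statement's English description precedes it below -/
import Mathlib

section
/- Let A and B be nonempty closed subsets of ℝⁿ and x* ∈ A ∩ B. If A and B intersect linearly regularly at x*, i.e. N_A(x*) ∩ (−N_B(x*)) = {0}, then A and B intersect 0-separably at x*: there exist γ > 0 and a neighborhood U of x* such that ⟨b − a⁺, b⁺ − a⁺⟩ ≤ (1 − γ)‖b − a⁺‖‖b⁺ − a⁺‖ for every building block b → a⁺ → b⁺ with b, a⁺, b⁺ ∈ U, and ⟨a − b, a⁺ − b⟩ ≤ (1 − γ)‖a − b‖‖a⁺ − b‖ for every building block a → b → a⁺ with a, b, a⁺ ∈ U. -/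
open Set Metric Filter Topology RealInnerProductSpace
open scoped ENNReal

variable {E : Type*} [NormedAddCommGroup E] [InnerProductSpace ℝ E]

/-- The (possibly set-valued) metric projection onto a set `S`. -/
noncomputable def projSet (S : Set E) (x : E) : Set E :=
  {s | s ∈ S ∧ ‖x - s‖ = Metric.infDist x S}

/-- The proximal normal cone to `S` at `s`. -/
def proxNormalCone (S : Set E) (s : E) : Set E :=
  {v | ∃ l : ℝ, 0 ≤ l ∧ ∃ u : E, v = l • u ∧ s ∈ projSet S (s + u)}

/-- The limiting (Mordukhovich) normal cone to `S` at `x`. -/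
def limitingNormalCone (S : Set E) (x : E) : Set E :=
  {v | ∃ (s : ℕ → E) (w : ℕ → E), (∀ k, s k ∈ S) ∧
    Filter.Tendsto s Filter.atTop (nhds x) ∧
    (∀ k, w k ∈ proxNormalCone S (s k)) ∧ Filter.Tendsto w Filter.atTop (nhds v)}

/-! Every building block produces two proximal normals, `b - a⁺` to `A` at `a⁺` and
`a⁺ - b⁺` to `B` at `b⁺` (resp. `a - b` to `B` at `b` and `b - a⁺` to `A` at `a⁺`), and the
inequality to prove says that the angle between them stays away from `π`. If it did not, unit
proximal normals to `A` and `B` at points tending to `x*` would have inner products tending to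
`-1`; by compactness of the unit sphere a subsequence converges to `(z, -z)` with `‖z‖ = 1`,
`z ∈ N_A(x*)` and `-z ∈ N_B(x*)`, contradicting linear regularity. -/

lemma sub_mem_proxNormalCone {S : Set E} {x s : E} (h : s ∈ projSet S x) :
    x - s ∈ proxNormalCone S s :=
  ⟨1, zero_le_one, x - s, (one_smul ℝ _).symm, by rwa [add_sub_cancel]⟩

lemma smul_mem_proxNormalCone {S : Set E} {s v : E} {c : ℝ} (hc : 0 ≤ c)
    (hv : v ∈ proxNormalCone S s) : c • v ∈ proxNormalCone S s := by
  obtain ⟨l, hl, u, rfl, hs⟩ := hv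
  exact ⟨c * l, mul_nonneg hc hl, u, smul_smul c l u, hs⟩

lemma tendsto_of_dist_lt_one_div {X : Type*} [PseudoMetricSpace X] {p : ℕ → X} {x : X}
    (hp : ∀ k, dist (p k) x < 1 / ((k : ℝ) + 1)) :
    Tendsto p atTop (𝓝 x) :=
  tendsto_iff_dist_tendsto_zero.2 <| squeeze_zero (fun _ => dist_nonneg) (fun k => (hp k).le)
    tendsto_one_div_add_atTop_nhds_zero_nat

lemma eq_neg_of_inner_le_neg_one {z w : E} (hz : ‖z‖ = 1) (hw : ‖w‖ = 1) (h : ⟪z, w⟫ ≤ -1) :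
    w = -z := by
  have hsq : ‖z + w‖ ^ 2 ≤ 0 := by
    rw [norm_add_sq_real, hz, hw]
    linarith
  rw [eq_neg_iff_add_eq_zero, add_comm, ← norm_eq_zero]
  exact pow_eq_zero_iff two_ne_zero |>.1 (le_antisymm hsq (sq_nonneg _))

lemma exists_sub_one_lt_inner_unit_proxNormalCone [ProperSpace E] {A B : Set E} {x : E}
    (h : limitingNormalCone A x ∩ -limitingNormalCone B x = {0}) :
    ∃ γ > (0 : ℝ), ∀ p ∈ A, ∀ q ∈ B, p ∈ ball x γ → q ∈ ball x γ →
      ∀ u ∈ proxNormalCone A p, ∀ v ∈ proxNormalCone B q, ‖u‖ = 1 → ‖v‖ = 1 →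
        γ - 1 < ⟪u, v⟫ := by
  by_contra! hcon
  have hpos (k : ℕ) : (0 : ℝ) < 1 / ((k : ℝ) + 1) := Nat.one_div_pos_of_nat
  choose p hpA q hqB hp hq u hu v hv hu1 hv1 huv using fun k : ℕ => hcon _ (hpos k)
  have hpx : Tendsto p atTop (𝓝 x) := tendsto_of_dist_lt_one_div hp
  have hqx : Tendsto q atTop (𝓝 x) := tendsto_of_dist_lt_one_div hq
  have hsphere : ∀ k, (u k, v k) ∈ sphere (0 : E) 1 ×ˢ sphere (0 : E) 1 := fun k => by
    simp [hu1 k, hv1 k]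
  obtain ⟨⟨z, w⟩, ⟨hz, hw⟩, φ, hφ, hzw⟩ :=
    ((isCompact_sphere (0 : E) 1).prod (isCompact_sphere (0 : E) 1)).tendsto_subseq hsphere
  have hz1 : ‖z‖ = 1 := by simpa using hz
  have hw1 : ‖w‖ = 1 := by simpa using hw
  have huz : Tendsto (u ∘ φ) atTop (𝓝 z) := (continuous_fst.tendsto _).comp hzw
  have hvw : Tendsto (v ∘ φ) atTop (𝓝 w) := (continuous_snd.tendsto _).comp hzw
  have hzA : z ∈ limitingNormalCone A x :=
    ⟨p ∘ φ, u ∘ φ, fun _ => hpA _, hpx.comp hφ.tendsto_atTop, fun _ => hu _, huz⟩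
  have hwB : w ∈ limitingNormalCone B x :=
    ⟨q ∘ φ, v ∘ φ, fun _ => hqB _, hqx.comp hφ.tendsto_atTop, fun _ => hv _, hvw⟩
  have hinner : ⟪z, w⟫ ≤ -1 := by
    have hlim : Tendsto (fun k => 1 / ((φ k : ℝ) + 1) - 1) atTop (𝓝 (0 - 1)) :=
      (tendsto_one_div_add_atTop_nhds_zero_nat.comp hφ.tendsto_atTop).sub_const 1
    rw [zero_sub] at hlim
    exact le_of_tendsto_of_tendsto' (huz.inner hvw) hlim fun k => huv (φ k)
  have hz0 : z ∈ limitingNormalCone A x ∩ -limitingNormalCone B x :=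
    ⟨hzA, by simpa [eq_neg_of_inner_le_neg_one hz1 hw1 hinner] using hwB⟩
  rw [h, mem_singleton_iff] at hz0
  simp [hz0] at hz1

lemma exists_neg_inner_le_proxNormalCone [ProperSpace E] {A B : Set E} {x : E}
    (h : limitingNormalCone A x ∩ -limitingNormalCone B x = {0}) :
    ∃ γ > (0 : ℝ), ∀ p ∈ A, ∀ q ∈ B, p ∈ ball x γ → q ∈ ball x γ →
      ∀ u ∈ proxNormalCone A p, ∀ v ∈ proxNormalCone B q, -⟪u, v⟫ ≤ (1 - γ) * ‖u‖ * ‖v‖ := by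
  obtain ⟨γ, hγ, hunit⟩ := exists_sub_one_lt_inner_unit_proxNormalCone h
  refine ⟨γ, hγ, fun p hp q hq hpx hqx u hu v hv => ?_⟩
  rcases eq_or_ne u 0 with rfl | hu0
  · simp
  rcases eq_or_ne v 0 with rfl | hv0
  · simp
  have hlt := hunit p hp q hq hpx hqx _ (smul_mem_proxNormalCone (by positivity) hu)
    _ (smul_mem_proxNormalCone (by positivity) hv) (norm_smul_inv_norm hu0) (norm_smul_inv_norm hv0)
  rw [real_inner_smul_left, real_inner_smul_right] at hlt
  have hnorm : 0 < ‖u‖ * ‖v‖ := by positivity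
  calc -⟪u, v⟫ = -(‖u‖ * ‖v‖ * (‖u‖⁻¹ * (‖v‖⁻¹ * ⟪u, v⟫))) := by field_simp
    _ ≤ -(‖u‖ * ‖v‖ * (γ - 1)) := neg_le_neg (mul_le_mul_of_nonneg_left hlt.le hnorm.le)
    _ = (1 - γ) * ‖u‖ * ‖v‖ := by ring

theorem stmt1_general {n : ℕ} (A B : Set (EuclideanSpace ℝ (Fin n)))
    (xs : EuclideanSpace ℝ (Fin n))
    (hlr : limitingNormalCone A xs ∩ (-(limitingNormalCone B xs)) = {0}) :
    ∃ γ > (0:ℝ), ∃ U ∈ nhds xs,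
      (∀ b a' b' : EuclideanSpace ℝ (Fin n), b ∈ B → a' ∈ projSet A b → b' ∈ projSet B a' →
        b ∈ U → a' ∈ U → b' ∈ U →
        ⟪b - a', b' - a'⟫ ≤ (1 - γ) * ‖b - a'‖ * ‖b' - a'‖) ∧
      (∀ a b a' : EuclideanSpace ℝ (Fin n), a ∈ A → b ∈ projSet B a → a' ∈ projSet A b →
        a ∈ U → b ∈ U → a' ∈ U →
        ⟪a - b, a' - b⟫ ≤ (1 - γ) * ‖a - b‖ * ‖a' - b‖) := by
  obtain ⟨γ, hγ, hangle⟩ := exists_neg_inner_le_proxNormalCone hlr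
  refine ⟨γ, hγ, ball xs γ, ball_mem_nhds xs hγ, ?_, ?_⟩
  · intro b a' b' _ ha' hb' _ ha'U hb'U
    have := hangle a' ha'.1 b' hb'.1 ha'U hb'U _ (sub_mem_proxNormalCone ha')
      _ (sub_mem_proxNormalCone hb')
    rwa [← neg_sub a' b', inner_neg_right, norm_neg]
  · intro a b a' _ hb ha' _ hbU ha'U
    have := hangle a' ha'.1 b hb.1 ha'U hbU _ (sub_mem_proxNormalCone ha')
      _ (sub_mem_proxNormalCone hb)
    rw [← neg_sub b a', inner_neg_right, norm_neg, real_inner_comm]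
    linarith

theorem stmt1 {n : ℕ} (A B : Set (EuclideanSpace ℝ (Fin n)))
    (hAne : A.Nonempty) (hBne : B.Nonempty) (hAc : IsClosed A) (hBc : IsClosed B)
    (xs : EuclideanSpace ℝ (Fin n)) (hxs : xs ∈ A ∩ B)
    (hlr : limitingNormalCone A xs ∩ (-(limitingNormalCone B xs)) = {0}) :
    ∃ γ > (0:ℝ), ∃ U ∈ nhds xs,
      (∀ b a' b' : EuclideanSpace ℝ (Fin n), b ∈ B → a' ∈ projSet A b → b' ∈ projSet B a' →
        b ∈ U → a' ∈ U → b' ∈ U →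
        ⟪b - a', b' - a'⟫ ≤ (1 - γ) * ‖b - a'‖ * ‖b' - a'‖) ∧
      (∀ a b a' : EuclideanSpace ℝ (Fin n), a ∈ A → b ∈ projSet B a → a' ∈ projSet A b →
        a ∈ U → b ∈ U → a' ∈ U →
        ⟪a - b, a' - b⟫ ≤ (1 - γ) * ‖a - b‖ * ‖a' - b‖) :=
  stmt1_general A B xs hlr
end

section
/- Let A and B be nonempty closed subsets of ℝⁿ that are intrinsically transversal at x* ∈ A ∩ B with constant κ ∈ (0,1]. Then A and B intersect 0-separably at x* with constant γ = κ²/2: there is a neighborhood U of x* such that ⟨b − a⁺, b⁺ − a⁺⟩ ≤ (1 − κ²/2)‖b − a⁺‖‖b⁺ − a⁺‖ for every building block b → a⁺ → b⁺ with b, a⁺, b⁺ ∈ U, and ⟨a − b, a⁺ − b⟩ ≤ (1 − κ²/2)‖a − b‖‖a⁺ − b‖ for every building block a → b → a⁺ with a, b, a⁺ ∈ U. -/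
open Set Metric Filter Topology RealInnerProductSpace
open scoped ENNReal

variable {E : Type*} [NormedAddCommGroup E] [InnerProductSpace ℝ E]

/-- `A` and `B` are intrinsically transversal at `x` with constant `κ`. -/
def IntrinsicallyTransversal (A B : Set E) (x : E) (κ : ℝ) : Prop :=
  ∃ U ∈ nhds x, ∀ a ∈ A ∩ U, a ∉ B → ∀ b ∈ B ∩ U, b ∉ A →
    κ ≤ max (Metric.infDist (‖a - b‖⁻¹ • (a - b)) (proxNormalCone B b))
            (Metric.infDist (‖a - b‖⁻¹ • (a - b)) (-(proxNormalCone A a)))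

/-
When `b'` lies in `A` as well, the block `b → a → b'` only uses the nearest-point
inequalities and gives the constant `1/2 ≤ 1 - κ²/2`. Otherwise `a ∉ B` (or the block is
degenerate), and `(a - b')/‖a - b'‖` is a unit proximal normal to `B` at `b'`, so
transversality keeps it at distance `≥ κ` from the ray `ℝ≥0 (a - b) ⊆ -N_A(a)`. A unit
vector at distance `≥ κ` from a ray makes an angle with cosine `≤ √(1 - κ²) ≤ 1 - κ²/2`
with it. Swapping `A` and `B` gives the blocks `a → b → a⁺`.
-/

section Projection

variable {F : Type*} [NormedAddCommGroup F] {S : Set F} {x s : F}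

lemma norm_sub_le_of_mem_projSet (hs : s ∈ projSet S x) {y : F} (hy : y ∈ S) :
    ‖x - s‖ ≤ ‖x - y‖ := by
  rw [hs.2, ← dist_eq_norm]
  exact infDist_le_dist_of_mem hy

lemma eq_of_mem_projSet_of_mem (hs : s ∈ projSet S x) (hx : x ∈ S) : s = x := by
  have h : ‖x - s‖ = 0 := by rw [hs.2, infDist_zero_of_mem hx]
  exact (sub_eq_zero.mp (norm_eq_zero.mp h)).symm

end Projection

lemma smul_sub_mem_proxNormalCone {S : Set E} {x s : E} (hs : s ∈ projSet S x) {t : ℝ}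
    (ht : 0 ≤ t) : t • (x - s) ∈ proxNormalCone S s :=
  ⟨t, ht, x - s, rfl, by simpa using hs⟩

lemma IntrinsicallyTransversal.symm {A B : Set E} {x : E} {κ : ℝ}
    (h : IntrinsicallyTransversal A B x κ) : IntrinsicallyTransversal B A x κ := by
  obtain ⟨U, hU, hT⟩ := h
  refine ⟨U, hU, fun b hb hbA a ha haB => ?_⟩
  have hneg : ‖b - a‖⁻¹ • (b - a) = -(‖a - b‖⁻¹ • (a - b)) := by
    rw [norm_sub_rev, ← smul_neg, neg_sub]
  have hdist (y : E) (K : Set E) : infDist (-y) K = infDist y (-K) := by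
    rw [← infDist_image isometry_neg, image_neg_eq_neg, neg_neg]
  rw [hneg, hdist, hdist, neg_neg, max_comm]
  exact hT a ha haB b hb hbA

lemma real_inner_le_half_mul_norm_mul_norm {u v : E} (huv : ‖u‖ ≤ ‖u - v‖) (hvu : ‖v‖ ≤ ‖u‖) :
    ⟪u, v⟫ ≤ 1 / 2 * ‖u‖ * ‖v‖ := by
  have h := norm_sub_sq_real u v
  nlinarith [mul_self_le_mul_self (norm_nonneg u) huv,
    mul_le_mul_of_nonneg_right hvu (norm_nonneg v)]

lemma real_inner_le_of_le_norm_sub_smul {κ : ℝ} (hκ₀ : 0 ≤ κ) (hκ₁ : κ ≤ 1) {w p : E}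
    (hw : ‖w‖ = 1) (h : ∀ t : ℝ, 0 ≤ t → κ ≤ ‖w - t • p‖) :
    ⟪w, p⟫ ≤ (1 - κ ^ 2 / 2) * ‖p‖ := by
  set c := ⟪w, p⟫
  have hcoef : 0 ≤ 1 - κ ^ 2 / 2 := by nlinarith
  rcases le_or_gt c 0 with hc | hc
  · exact hc.trans (mul_nonneg hcoef (norm_nonneg p))
  have hp : 0 < ‖p‖ := norm_pos_iff.mpr (by rintro rfl; simp [c] at hc)
  -- the foot of the perpendicular from `w` to the ray
  set t := c / ‖p‖ ^ 2
  have hfoot : ‖w - t • p‖ ^ 2 = 1 - c ^ 2 / ‖p‖ ^ 2 := by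
    rw [norm_sub_sq_real, real_inner_smul_right, norm_smul, Real.norm_eq_abs, mul_pow, sq_abs, hw]
    simp only [t, c]
    field_simp
    ring
  have hκt : κ ^ 2 ≤ 1 - c ^ 2 / ‖p‖ ^ 2 :=
    hfoot ▸ pow_le_pow_left₀ hκ₀ (h t (by positivity)) 2
  have hc2 : c ^ 2 ≤ (1 - κ ^ 2) * ‖p‖ ^ 2 := by
    rw [le_sub_comm, div_le_iff₀ (by positivity)] at hκt
    linarith
  refine le_of_sq_le_sq ?_ (mul_nonneg hcoef hp.le)
  nlinarith [sq_nonneg (κ ^ 2 * ‖p‖)]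

lemma real_inner_le_of_le_infDist {κ : ℝ} (hκ₀ : 0 ≤ κ) (hκ₁ : κ ≤ 1) {K : Set E} {v p : E}
    (hv : v ≠ 0) (hp : ∀ t : ℝ, 0 ≤ t → t • p ∈ K) (hK : κ ≤ infDist (‖v‖⁻¹ • v) K) :
    ⟪v, p⟫ ≤ (1 - κ ^ 2 / 2) * ‖v‖ * ‖p‖ := by
  have hv' : 0 < ‖v‖ := norm_pos_iff.mpr hv
  have hw : ‖‖v‖⁻¹ • v‖ = 1 := by
    rw [norm_smul, norm_inv, norm_norm, inv_mul_cancel₀ hv'.ne']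
  have hunit := real_inner_le_of_le_norm_sub_smul hκ₀ hκ₁ hw fun t ht =>
    (hK.trans (infDist_le_dist_of_mem (hp t ht))).trans_eq (dist_eq_norm _ _)
  rw [real_inner_smul_left, inv_mul_le_iff₀ hv'] at hunit
  linarith

theorem IntrinsicallyTransversal.exists_real_inner_le {A B : Set E} {x : E} {κ : ℝ}
    (hκ₀ : 0 < κ) (hκ₁ : κ ≤ 1) (h : IntrinsicallyTransversal A B x κ) :
    ∃ U ∈ 𝓝 x, ∀ b a b' : E, b ∈ B → a ∈ projSet A b → b' ∈ projSet B a → a ∈ U → b' ∈ U →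
      ⟪b - a, b' - a⟫ ≤ (1 - κ ^ 2 / 2) * ‖b - a‖ * ‖b' - a‖ := by
  obtain ⟨U, hU, hT⟩ := h
  refine ⟨U, hU, fun b a b' hb ha hb' haU hb'U => ?_⟩
  by_cases hb'A : b' ∈ A
  · have hhalf := real_inner_le_half_mul_norm_mul_norm (u := b - a) (v := b' - a)
      (by simpa using norm_sub_le_of_mem_projSet ha hb'A)
      (by simpa only [norm_sub_rev _ a] using norm_sub_le_of_mem_projSet hb' hb)
    have hκ2 : 1 / 2 ≤ 1 - κ ^ 2 / 2 := by nlinarith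
    nlinarith [mul_nonneg (norm_nonneg (b - a)) (norm_nonneg (b' - a))]
  by_cases haB : a ∈ B
  · simp [eq_of_mem_projSet_of_mem hb' haB]
  have hv : a - b' ≠ 0 := sub_ne_zero.mpr fun hab' => haB (hab' ▸ hb'.1)
  have hnormal : ‖a - b'‖⁻¹ • (a - b') ∈ proxNormalCone B b' :=
    smul_sub_mem_proxNormalCone hb' (by positivity)
  have hmax := hT a ⟨ha.1, haU⟩ haB b' ⟨hb'.1, hb'U⟩ hb'A
  rw [infDist_zero_of_mem hnormal, le_max_iff] at hmax
  have hK : κ ≤ infDist (‖a - b'‖⁻¹ • (a - b')) (-proxNormalCone A a) :=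
    hmax.resolve_left (by linarith)
  have hray (t : ℝ) (ht : 0 ≤ t) : t • (a - b) ∈ -proxNormalCone A a := by
    rw [Set.mem_neg, ← smul_neg, neg_sub]
    exact smul_sub_mem_proxNormalCone ha ht
  have hmain := real_inner_le_of_le_infDist hκ₀.le hκ₁ hv hray hK
  rwa [← neg_sub b' a, ← neg_sub b a, inner_neg_neg, real_inner_comm, norm_neg, norm_neg,
    mul_right_comm] at hmain

theorem stmt2_general {n : ℕ} (A B : Set (EuclideanSpace ℝ (Fin n)))
    (xs : EuclideanSpace ℝ (Fin n))
    (κ : ℝ) (hκ : κ ∈ Set.Ioc (0:ℝ) 1)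
    (hit : IntrinsicallyTransversal A B xs κ) :
    ∃ U ∈ nhds xs,
      (∀ b a' b' : EuclideanSpace ℝ (Fin n), b ∈ B → a' ∈ projSet A b → b' ∈ projSet B a' →
        b ∈ U → a' ∈ U → b' ∈ U →
        ⟪b - a', b' - a'⟫ ≤ (1 - κ ^ 2 / 2) * ‖b - a'‖ * ‖b' - a'‖) ∧
      (∀ a b a' : EuclideanSpace ℝ (Fin n), a ∈ A → b ∈ projSet B a → a' ∈ projSet A b →
        a ∈ U → b ∈ U → a' ∈ U →
        ⟪a - b, a' - b⟫ ≤ (1 - κ ^ 2 / 2) * ‖a - b‖ * ‖a' - b‖) := by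
  obtain ⟨U, hU, hBAB⟩ := hit.exists_real_inner_le hκ.1 hκ.2
  obtain ⟨V, hV, hABA⟩ := hit.symm.exists_real_inner_le hκ.1 hκ.2
  refine ⟨U ∩ V, inter_mem hU hV, ?_, ?_⟩
  · exact fun b a' b' hb ha' hb' _ ha'U hb'U => hBAB b a' b' hb ha' hb' ha'U.1 hb'U.1
  · exact fun a b a' ha hb ha' _ hbV ha'V => hABA a b a' ha hb ha' hbV.2 ha'V.2

theorem stmt2 {n : ℕ} (A B : Set (EuclideanSpace ℝ (Fin n)))
    (hAne : A.Nonempty) (hBne : B.Nonempty) (hAc : IsClosed A) (hBc : IsClosed B)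
    (xs : EuclideanSpace ℝ (Fin n)) (hxs : xs ∈ A ∩ B)
    (κ : ℝ) (hκ : κ ∈ Set.Ioc (0:ℝ) 1)
    (hit : IntrinsicallyTransversal A B xs κ) :
    ∃ U ∈ nhds xs,
      (∀ b a' b' : EuclideanSpace ℝ (Fin n), b ∈ B → a' ∈ projSet A b → b' ∈ projSet B a' →
        b ∈ U → a' ∈ U → b' ∈ U →
        ⟪b - a', b' - a'⟫ ≤ (1 - κ ^ 2 / 2) * ‖b - a'‖ * ‖b' - a'‖) ∧
      (∀ a b a' : EuclideanSpace ℝ (Fin n), a ∈ A → b ∈ projSet B a → a' ∈ projSet A b →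
        a ∈ U → b ∈ U → a' ∈ U →
        ⟪a - b, a' - b⟫ ≤ (1 - κ ^ 2 / 2) * ‖a - b‖ * ‖a' - b‖) :=
  stmt2_general A B xs κ hκ hit
end

section
/- Let A and B be nonempty closed subsets of ℝⁿ, b* ∈ A ∩ B, and suppose B is (A,ε,δ)-regular at b* for some ε > 0 and δ > 0. Then B is 0-Hölder regular with respect to A at b* with constant c = ε²; more precisely, with U the open ball of radius δ/(4(1+ε²)) around b*, for every a⁺ ∈ A ∩ U and every b⁺ ∈ P_B(a⁺) ∩ U, setting r = ‖a⁺ − b⁺‖, there is no b ∈ B with ‖b − a⁺‖ ≤ (1+ε²)r, a⁺ ∈ P_A(b), and ⟨a⁺ − b⁺, b − b⁺⟩ > ε·r·‖b − b⁺‖. -/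
open Set Metric Filter Topology RealInnerProductSpace
open scoped ENNReal

variable {E : Type*} [NormedAddCommGroup E] [InnerProductSpace ℝ E]

/-- `B` is `(A,ε,δ)`-regular at `bs`. -/
def ADRegular (A B : Set E) (bs : E) (ε δ : ℝ) : Prop :=
  ∀ b ∈ B, ∀ b' ∈ B, ‖b - bs‖ ≤ δ → ‖b' - bs‖ ≤ δ →
    ∀ l : ℝ, 0 ≤ l → ∀ a ∈ A, b' ∈ projSet B a →
      ⟪l • (a - b'), b - b'⟫ ≤ ε * ‖l • (a - b')‖ * ‖b - b'‖

theorem stmt4 {n : ℕ} (A B : Set (EuclideanSpace ℝ (Fin n)))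
    (hAne : A.Nonempty) (hBne : B.Nonempty) (hAc : IsClosed A) (hBc : IsClosed B)
    (bs : EuclideanSpace ℝ (Fin n)) (hbs : bs ∈ A ∩ B)
    (ε δ : ℝ) (hε : 0 < ε) (hδ : 0 < δ)
    (hreg : ADRegular A B bs ε δ) :
    ∀ a' ∈ A ∩ Metric.ball bs (δ / (4 * (1 + ε ^ 2))),
      ∀ b' ∈ projSet B a' ∩ Metric.ball bs (δ / (4 * (1 + ε ^ 2))),
        ¬ ∃ b ∈ B, ‖b - a'‖ ≤ (1 + ε ^ 2) * ‖a' - b'‖ ∧ a' ∈ projSet A b ∧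
          ε * ‖a' - b'‖ * ‖b - b'‖ < ⟪a' - b', b - b'⟫ := by
  rintro a' ⟨ha'A, ha'U⟩ b' ⟨hb'P, hb'U⟩ ⟨b, hbB, hble, _, hlt⟩
  have hb'B : b' ∈ B := hb'P.1
  have hpos : (0:ℝ) < 1 + ε ^ 2 := by positivity
  have ht : δ / (4 * (1 + ε ^ 2)) ≤ δ / 4 := by
    apply div_le_div_of_nonneg_left hδ.le (by norm_num)
    nlinarith
  rw [Metric.mem_ball, dist_eq_norm] at ha'U hb'U
  have hr : ‖a' - b'‖ ≤ 2 * (δ / (4 * (1 + ε ^ 2))) := by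
    calc ‖a' - b'‖ ≤ ‖a' - bs‖ + ‖bs - b'‖ := norm_sub_le_norm_sub_add_norm_sub _ _ _
    _ ≤ _ := by rw [norm_sub_rev bs]; linarith
  have hbbs : ‖b - bs‖ ≤ δ := by
    have h1 : ‖b - bs‖ ≤ ‖b - a'‖ + ‖a' - bs‖ := norm_sub_le_norm_sub_add_norm_sub _ _ _
    have h2 : (1 + ε ^ 2) * ‖a' - b'‖ ≤ (1 + ε ^ 2) * (2 * (δ / (4 * (1 + ε ^ 2)))) :=
      mul_le_mul_of_nonneg_left hr hpos.le
    have h3 : (1 + ε ^ 2) * (2 * (δ / (4 * (1 + ε ^ 2)))) = δ / 2 := by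
      field_simp; ring
    have := ht
    linarith
  have hb'bs : ‖b' - bs‖ ≤ δ := by linarith
  have key := hreg b hbB b' hb'B hbbs hb'bs 1 zero_le_one a' ha'A hb'P
  simp only [one_smul] at key
  linarith
end

section
/- Let A and B be nonempty closed subsets of ℝⁿ, b* ∈ A ∩ B, and σ ∈ (0,1). Suppose B has σ-slowly vanishing reach with respect to A at b* with rate τ ∈ [0,1). Then B is (1−σ)-Hölder regular with respect to A at b* with any constant c > 0 satisfying (τ/2)·√(2+c) < 1. -/
/-!
Let `b'` be a nearest point of `B` to `a'`, `r = ‖a' - b'‖` and `d = (a' - b') / r`. Slowly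
vanishing reach lets `b'` slide out along `d` to distance `t = r^σ / τ''` (any `τ'' > τ`) while
staying the nearest point, and the proximal normal inequality `2t⟪d, b - b'⟫ ≤ ‖b - b'‖²` for
`b ∈ B` becomes `⟪a' - b', b - b'⟫ ≤ (τ''/2) r^(1-σ) ‖b - b'‖²`. Expanding `‖b - b'‖²` through `a'`
with `‖b - a'‖ ≤ (1 + c) r` gives `‖b - b'‖ ≤ (2√c/τ'') r` once `r^(1-σ)` is small, i.e. `a'`
is close to `b*`; this needs the room `2c + c² < (2√c/τ'')²`, which is `τ''² (2 + c) < 4`, and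
is why `(τ/2)√(2 + c) < 1` is assumed. Multiplying the two bounds gives the Hölder inequality with
constant `√c`.
-/

open Set Metric Filter Topology RealInnerProductSpace
open scoped ENNReal

variable {E : Type*} [NormedAddCommGroup E] [InnerProductSpace ℝ E]

/-- The reach of `B` at `b` along the direction `d`, as an element of `[0,∞]`. -/
noncomputable def reach (B : Set E) (b d : E) : ℝ≥0∞ :=
  sSup {R : ℝ≥0∞ | ∀ t : ℝ, 0 ≤ t → ENNReal.ofReal t ≤ R → projSet B (b + t • d) = {b}}

/-- `B` has `σ`-slowly vanishing reach with respect to `A` at `bs` with rate `τ`. -/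
def SlowlyVanishingReach (A B : Set E) (bs : E) (σ τ : ℝ) : Prop :=
  ∀ τ' : ℝ, τ < τ' → ∃ δ > (0:ℝ), ∀ a ∈ A, ‖a - bs‖ < δ → a ∉ B → ∀ b ∈ projSet B a,
    ENNReal.ofReal (‖a - b‖ ^ σ) ≤ ENNReal.ofReal τ' * reach B b (‖a - b‖⁻¹ • (a - b))

/-- `B` is `σ`-Hölder regular with respect to `A` at `bs` with constant `c`. -/
def HolderRegular (A B : Set E) (bs : E) (σ c : ℝ) : Prop :=
  ∃ U ∈ nhds bs, ∀ a' ∈ A ∩ U, ∀ b' ∈ projSet B a' ∩ U, ∀ b ∈ B,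
    ‖b - a'‖ ≤ (1 + c) * ‖a' - b'‖ → a' ∈ projSet A b →
    ⟪a' - b', b - b'⟫ ≤ Real.sqrt c * ‖a' - b'‖ ^ (σ + 1) * ‖b - b'‖

theorem two_inner_le_norm_sq_of_mem_projSet {B : Set E} {y b x : E} (hb : b ∈ projSet B y)
    (hx : x ∈ B) : 2 * ⟪y - b, x - b⟫ ≤ ‖x - b‖ ^ 2 := by
  have hle : ‖y - b‖ ≤ ‖y - x‖ := by
    rw [hb.2, ← dist_eq_norm]
    exact infDist_le_dist_of_mem hx
  have hsq : ‖y - b‖ ^ 2 ≤ ‖(y - b) - (x - b)‖ ^ 2 := by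
    rw [sub_sub_sub_cancel_right]
    exact pow_le_pow_left₀ (norm_nonneg _) hle 2
  rw [norm_sub_sq_real (y - b) (x - b)] at hsq
  linarith

theorem mem_projSet_of_lt_reach {B : Set E} {b d : E} {t : ℝ} (ht : 0 ≤ t)
    (h : ENNReal.ofReal t < reach B b d) : b ∈ projSet B (b + t • d) := by
  obtain ⟨R, hR, htR⟩ := lt_sSup_iff.1 h
  rw [hR t ht htR.le]
  exact mem_singleton b

theorem two_mul_inner_le_of_lt_reach {B : Set E} {b v x : E} {t : ℝ} (ht : 0 ≤ t)
    (h : ENNReal.ofReal t < reach B b (‖v‖⁻¹ • v)) (hx : x ∈ B) :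
    2 * t * ⟪v, x - b⟫ ≤ ‖v‖ * ‖x - b‖ ^ 2 := by
  rcases eq_or_ne v 0 with rfl | hv
  · simp
  have hprox := two_inner_le_norm_sq_of_mem_projSet (mem_projSet_of_lt_reach ht h) hx
  rw [add_sub_cancel_left, smul_smul, real_inner_smul_left] at hprox
  have hnorm : 0 < ‖v‖ := norm_pos_iff.2 hv
  calc 2 * t * ⟪v, x - b⟫ = ‖v‖ * (2 * (t * ‖v‖⁻¹ * ⟪v, x - b⟫)) := by field_simp
    _ ≤ ‖v‖ * ‖x - b‖ ^ 2 := by gcongr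

theorem inner_le_of_rpow_le_mul_reach {B : Set E} {b v x : E} {σ τ' τ'' : ℝ} (hτ' : 0 < τ')
    (hτ'τ'' : τ' < τ'') (hv : v ≠ 0)
    (h : ENNReal.ofReal (‖v‖ ^ σ) ≤ ENNReal.ofReal τ' * reach B b (‖v‖⁻¹ • v)) (hx : x ∈ B) :
    ⟪v, x - b⟫ ≤ τ'' * ‖v‖ ^ (1 - σ) / 2 * ‖x - b‖ ^ 2 := by
  have hr : 0 < ‖v‖ := norm_pos_iff.2 hv
  have hP : 0 < ‖v‖ ^ σ := Real.rpow_pos_of_pos hr σ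
  have hτ'' : 0 < τ'' := hτ'.trans hτ'τ''
  have hlt : ENNReal.ofReal (‖v‖ ^ σ / τ'') < reach B b (‖v‖⁻¹ • v) := by
    calc ENNReal.ofReal (‖v‖ ^ σ / τ'') < ENNReal.ofReal (‖v‖ ^ σ / τ') :=
          (ENNReal.ofReal_lt_ofReal_iff (div_pos hP hτ')).2 (div_lt_div_of_pos_left hP hτ' hτ'τ'')
      _ ≤ reach B b (‖v‖⁻¹ • v) := by
          rw [ENNReal.ofReal_div_of_pos hτ']
          exact ENNReal.div_le_of_le_mul' h
  have hmain := two_mul_inner_le_of_lt_reach (div_pos hP hτ'').le hlt hx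
  have hsplit : ‖v‖ ^ σ * ‖v‖ ^ (1 - σ) = ‖v‖ := by
    rw [← Real.rpow_add hr, add_sub_cancel, Real.rpow_one]
  calc ⟪v, x - b⟫ = τ'' / (2 * ‖v‖ ^ σ) * (2 * (‖v‖ ^ σ / τ'') * ⟪v, x - b⟫) := by field_simp
    _ ≤ τ'' / (2 * ‖v‖ ^ σ) * (‖v‖ * ‖x - b‖ ^ 2) := by gcongr
    _ = τ'' / (2 * ‖v‖ ^ σ) * (‖v‖ ^ σ * ‖v‖ ^ (1 - σ) * ‖x - b‖ ^ 2) := by rw [hsplit]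
    _ = τ'' * ‖v‖ ^ (1 - σ) / 2 * ‖x - b‖ ^ 2 := by field_simp

theorem norm_sub_le_of_inner_le {a b b' : E} {c κ M : ℝ} (hκ : 0 ≤ κ) (hM : 0 ≤ M)
    (hinner : ⟪a - b', b - b'⟫ ≤ κ / 2 * ‖b - b'‖ ^ 2) (hdist : ‖b - a‖ ≤ (1 + c) * ‖a - b'‖)
    (hκM : 2 * c + c ^ 2 + κ * (2 + c) ^ 2 ≤ M ^ 2) :
    ‖b - b'‖ ≤ M * ‖a - b'‖ := by
  have hsplit : b - b' = (b - a) + (a - b') := (sub_add_sub_cancel b a b').symm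
  have hpyth : ‖b - b'‖ ^ 2 = ‖b - a‖ ^ 2 - ‖a - b'‖ ^ 2 + 2 * ⟪a - b', b - b'⟫ := by
    rw [hsplit, norm_add_sq_real, inner_add_right, real_inner_self_eq_norm_sq, real_inner_comm]
    ring
  have hs : ‖b - b'‖ ≤ (2 + c) * ‖a - b'‖ := by
    calc ‖b - b'‖ ≤ ‖b - a‖ + ‖a - b'‖ := hsplit ▸ norm_add_le _ _
      _ ≤ (2 + c) * ‖a - b'‖ := by linarith
  have hs2 := pow_le_pow_left₀ (norm_nonneg _) hs 2
  have hm2 := pow_le_pow_left₀ (norm_nonneg _) hdist 2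
  have hsq : ‖b - b'‖ ^ 2 ≤ (M * ‖a - b'‖) ^ 2 := by nlinarith
  exact (pow_le_pow_iff_left₀ (norm_nonneg _) (by positivity) two_ne_zero).1 hsq

theorem tendsto_infDist_rpow_nhds_zero {X : Type*} [PseudoMetricSpace X] {B : Set X} {x : X}
    (hx : x ∈ B) {α : ℝ} (hα : 0 < α) :
    Tendsto (fun y => infDist y B ^ α) (𝓝 x) (𝓝 0) := by
  have hcont : Continuous fun y => infDist y B ^ α :=
    (continuous_infDist_pt B).rpow_const fun _ => Or.inr hα.le
  simpa [infDist_zero_of_mem hx, Real.zero_rpow hα.ne'] using hcont.tendsto x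

theorem inner_le_sqrt_mul_rpow_mul_norm_of_rpow_le_mul_reach {B : Set E} {a b' b : E}
    {σ τ' τ'' c : ℝ} (hτ' : 0 < τ') (hτ'τ'' : τ' < τ'') (hab' : a ≠ b') (hb : b ∈ B)
    (hreach : ENNReal.ofReal (‖a - b'‖ ^ σ) ≤
      ENNReal.ofReal τ' * reach B b' (‖a - b'‖⁻¹ • (a - b')))
    (hdist : ‖b - a‖ ≤ (1 + c) * ‖a - b'‖)
    (hsmall : 2 * c + c ^ 2 + τ'' * ‖a - b'‖ ^ (1 - σ) * (2 + c) ^ 2 ≤ (2 * √c / τ'') ^ 2) :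
    ⟪a - b', b - b'⟫ ≤ √c * ‖a - b'‖ ^ (1 - σ + 1) * ‖b - b'‖ := by
  have hτ'' : 0 < τ'' := hτ'.trans hτ'τ''
  have hv : a - b' ≠ 0 := sub_ne_zero.2 hab'
  have hinner := inner_le_of_rpow_le_mul_reach hτ' hτ'τ'' hv hreach hb
  have hs := norm_sub_le_of_inner_le (by positivity) (by positivity) hinner hdist hsmall
  calc ⟪a - b', b - b'⟫ ≤ τ'' * ‖a - b'‖ ^ (1 - σ) / 2 * ‖b - b'‖ * ‖b - b'‖ := by linarith
    _ ≤ τ'' * ‖a - b'‖ ^ (1 - σ) / 2 * ‖b - b'‖ * (2 * √c / τ'' * ‖a - b'‖) := by gcongr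
    _ = √c * ‖a - b'‖ ^ (1 - σ + 1) * ‖b - b'‖ := by
      rw [Real.rpow_add_one (norm_ne_zero_iff.2 hv)]
      field_simp

theorem exists_gt_sq_mul_lt_four {τ c : ℝ} (hτ : 0 ≤ τ) (hc : 0 < 2 + c)
    (hτc : τ / 2 * √(2 + c) < 1) : ∃ τ'' > τ, τ'' ^ 2 * (2 + c) < 4 := by
  have hsqrt : 0 < √(2 + c) := Real.sqrt_pos.2 hc
  obtain ⟨τ'', hττ'', hτ''c⟩ := exists_between (show τ < 2 / √(2 + c) by
    rw [lt_div_iff₀ hsqrt]; linarith)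
  refine ⟨τ'', hττ'', ?_⟩
  have h := pow_lt_pow_left₀ ((lt_div_iff₀ hsqrt).1 hτ''c)
    (mul_nonneg (hτ.trans hττ''.le) hsqrt.le) two_ne_zero
  rwa [mul_pow, Real.sq_sqrt hc.le, (by norm_num : (2 : ℝ) ^ 2 = 4)] at h

theorem two_mul_add_sq_lt_sq_two_mul_sqrt_div {τ c : ℝ} (hτ : 0 < τ) (hc : 0 < c)
    (h : τ ^ 2 * (2 + c) < 4) : 2 * c + c ^ 2 < (2 * √c / τ) ^ 2 := by
  rw [div_pow, mul_pow, Real.sq_sqrt hc.le, lt_div_iff₀ (by positivity)]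
  nlinarith

theorem stmt7_general {n : ℕ} (A B : Set (EuclideanSpace ℝ (Fin n)))
    (bs : EuclideanSpace ℝ (Fin n)) (hbs : bs ∈ A ∩ B)
    (σ τ : ℝ) (hσ : σ ∈ Set.Ioo (0:ℝ) 1) (hτ : τ ∈ Set.Ico (0:ℝ) 1)
    (hsvr : SlowlyVanishingReach A B bs σ τ) :
    ∀ c : ℝ, 0 < c → (τ / 2) * Real.sqrt (2 + c) < 1 →
      HolderRegular A B bs (1 - σ) c := by
  intro c hc hτc
  obtain ⟨τ'', hττ'', hτ''c⟩ := exists_gt_sq_mul_lt_four hτ.1 (by linarith) hτc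
  obtain ⟨τ', hττ', hτ'τ''⟩ := exists_between hττ''
  have hτ' : 0 < τ' := hτ.1.trans_lt hττ'
  have hgap := two_mul_add_sq_lt_sq_two_mul_sqrt_div (hτ'.trans hτ'τ'') hc hτ''c
  have hnear : ∀ᶠ a in 𝓝 bs,
      τ'' * infDist a B ^ (1 - σ) * (2 + c) ^ 2 < (2 * √c / τ'') ^ 2 - (2 * c + c ^ 2) := by
    have := ((tendsto_infDist_rpow_nhds_zero hbs.2 (sub_pos.2 hσ.2)).const_mul τ'').mul_const
      ((2 + c) ^ 2)
    rw [mul_zero, zero_mul] at this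
    exact this.eventually (gt_mem_nhds (sub_pos.2 hgap))
  obtain ⟨δ, hδ, hreach⟩ := hsvr τ' hττ'
  refine ⟨ball bs δ ∩ {a | _}, inter_mem (ball_mem_nhds bs hδ) hnear, ?_⟩
  rintro a ⟨haA, haδ, hasmall⟩ b' ⟨hb', -⟩ b hb hba -
  by_cases haB : a ∈ B
  · rw [norm_eq_zero.1 (hb'.2.trans (infDist_zero_of_mem haB)), inner_zero_left]
    positivity
  refine inner_le_sqrt_mul_rpow_mul_norm_of_rpow_le_mul_reach hτ' hτ'τ''
    (ne_of_mem_of_not_mem hb'.1 haB).symm hb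
    (hreach a haA (mem_ball_iff_norm.1 haδ) haB b' hb') hba ?_
  rw [hb'.2]
  linarith [hasmall.out]

theorem stmt7 {n : ℕ} (A B : Set (EuclideanSpace ℝ (Fin n)))
    (hAne : A.Nonempty) (hBne : B.Nonempty) (hAc : IsClosed A) (hBc : IsClosed B)
    (bs : EuclideanSpace ℝ (Fin n)) (hbs : bs ∈ A ∩ B)
    (σ τ : ℝ) (hσ : σ ∈ Set.Ioo (0:ℝ) 1) (hτ : τ ∈ Set.Ico (0:ℝ) 1)
    (hsvr : SlowlyVanishingReach A B bs σ τ) :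
    ∀ c : ℝ, 0 < c → (τ / 2) * Real.sqrt (2 + c) < 1 →
      HolderRegular A B bs (1 - σ) c :=
  stmt7_general A B bs hbs σ τ hσ hτ hsvr
end

section
/- Let A and B be nonempty closed subsets of ℝⁿ and b* ∈ A ∩ B. If B is prox-regular at b*, then for every σ ∈ [0,1) and every c̄ > 0 there exists c ∈ (0, c̄) such that B is σ-Hölder regular with respect to A at b* with constant c. -/
open Set Metric Filter Topology RealInnerProductSpace
open scoped ENNReal

variable {E : Type*} [NormedAddCommGroup E] [InnerProductSpace ℝ E]

/-- `B` is prox-regular at `bs`: the projection onto `B` is single-valued near `bs`. -/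
def ProxRegularAt (B : Set E) (bs : E) : Prop :=
  ∃ U ∈ nhds bs, ∀ y ∈ U, ∃ p : E, projSet B y = {p}

/-! Where nearest points in `B` are unique they depend continuously on the point, so moving a
point `w` off `B` along its unit normal raises `d_B` at a rate close to `1`. A continuous induction
on `t ↦ max {d_B(w) : ‖w - a‖ ≤ t}` then gives, for `b' ∈ P_B(a)` and `r = ‖a - b'‖`, a point `w`
with `‖w - a‖ ≤ T` and `d_B(w) ≥ r + T`. This forces `w` onto the ray from `b'` through `a`, and
the ball of radius `r + T` around `w` missing `B` yields `2T⟪a - b', b - b'⟫ ≤ r‖b - b'‖²` for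
`b ∈ B`. For the `b` tested in Hölder regularity `‖b - b'‖ ≤ (2 + c) r`, so the right-hand side
is at most `(2 + c) r^(1-σ) · r^(1+σ) ‖b - b'‖`, and `r^(1-σ) → 0` near `b*`. -/

section Normed

variable {F : Type*} [NormedAddCommGroup F]

lemma projSet_nonempty [ProperSpace F] {B : Set F} (hB : IsClosed B) (hBne : B.Nonempty)
    (x : F) : (projSet B x).Nonempty := by
  obtain ⟨y, hyB, hy⟩ := hB.exists_infDist_eq_dist hBne x
  exact ⟨y, hyB, by rw [← dist_eq_norm, hy]⟩

lemma exists_forall_norm_sub_lt_of_projSet_eq_singleton [ProperSpace F] {B : Set F}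
    (hB : IsClosed B) {w q : F} (hq : projSet B w = {q}) {ε : ℝ} (hε : 0 < ε) :
    ∃ η > 0, ∀ w', ‖w' - w‖ < η → ∀ q' ∈ projSet B w', ‖q' - q‖ < ε := by
  set d := infDist w B
  set K := B ∩ closedBall w (d + 1) ∩ {x | ε ≤ ‖x - q‖}
  have hK : IsCompact K := (isCompact_closedBall w (d + 1)).inter_left hB |>.inter_right
    (isClosed_le continuous_const (continuous_id.sub continuous_const).norm)
  have hfar : ∀ x ∈ K, d < dist w x := by
    rintro x ⟨⟨hxB, -⟩, hxq : ε ≤ ‖x - q‖⟩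
    refine (infDist_le_dist_of_mem hxB).lt_of_ne fun hx => ?_
    have : x ∈ projSet B w := ⟨hxB, by rw [← dist_eq_norm, hx]⟩
    rw [hq, mem_singleton_iff] at this
    rw [this, sub_self, norm_zero] at hxq
    linarith
  obtain ⟨m, hdm, hm⟩ := hK.exists_forall_le' (continuous_const.dist continuous_id).continuousOn hfar
  refine ⟨min (1 / 2) ((m - d) / 2), by positivity, fun w' hw' q' hq' => ?_⟩
  by_contra! hq'q
  have hwq' : dist w q' < min (d + 1) m := by
    have hd' : infDist w' B ≤ d + dist w' w := infDist_le_infDist_add_dist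
    rw [dist_eq_norm] at hd' ⊢
    have := norm_sub_le_norm_sub_add_norm_sub w w' q'
    rw [norm_sub_rev w w', hq'.2] at this
    have := min_le_left (1 / 2 : ℝ) ((m - d) / 2)
    have := min_le_right (1 / 2 : ℝ) ((m - d) / 2)
    exact lt_min (by linarith) (by linarith)
  have hq'K : q' ∈ K := ⟨⟨hq'.1, mem_closedBall'.2 (hwq'.le.trans (min_le_left _ _))⟩, hq'q⟩
  exact (hm q' hq'K).not_gt (hwq'.trans_le (min_le_right _ _))

variable [NormedSpace ℝ F]

-- The maximum of `d_B` over `closedBall a t` (for `t ≥ 0`), parametrised by the unit ball so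
-- that it is continuous in `t` by `IsCompact.continuous_sSup`.
noncomputable def ballMaxInfDist (B : Set F) (a : F) (t : ℝ) : ℝ :=
  sSup ((fun v => infDist (a + t • v) B) '' closedBall 0 1)

variable [ProperSpace F]

lemma continuous_ballMaxInfDist (B : Set F) (a : F) : Continuous (ballMaxInfDist B a) :=
  (isCompact_closedBall 0 1).continuous_sSup
    ((continuous_infDist_pt B).comp (continuous_const.add (continuous_fst.smul continuous_snd)))

lemma infDist_le_ballMaxInfDist {B : Set F} {a w : F} {t : ℝ} (hw : ‖w - a‖ ≤ t) :
    infDist w B ≤ ballMaxInfDist B a t := by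
  have hcont : Continuous fun v : F => infDist (a + t • v) B :=
    (continuous_infDist_pt B).comp (by fun_prop)
  have hbdd := (isCompact_closedBall (0 : F) 1).bddAbove_image hcont.continuousOn
  refine le_csSup hbdd ⟨t⁻¹ • (w - a), ?_, ?_⟩
  · rcases ((norm_nonneg _).trans hw).eq_or_lt with rfl | ht
    · simp
    · rw [mem_closedBall_zero_iff, norm_smul, norm_inv, Real.norm_of_nonneg ht.le]
      exact inv_mul_le_one_of_le₀ hw ht.le
  · rcases ((norm_nonneg _).trans hw).eq_or_lt with rfl | ht
    · obtain rfl : w = a := sub_eq_zero.1 (norm_le_zero_iff.1 hw)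
      simp
    · simp [smul_smul, ht.ne']

lemma exists_infDist_eq_ballMaxInfDist (B : Set F) (a : F) {t : ℝ} (ht : 0 ≤ t) :
    ∃ w, ‖w - a‖ ≤ t ∧ infDist w B = ballMaxInfDist B a t := by
  have hcont : Continuous fun v : F => infDist (a + t • v) B :=
    (continuous_infDist_pt B).comp (by fun_prop)
  obtain ⟨v, hv, hsup, -⟩ := (isCompact_closedBall (0 : F) 1).exists_sSup_image_eq_and_ge
    (nonempty_closedBall.2 zero_le_one) hcont.continuousOn
  refine ⟨a + t • v, ?_, hsup.symm⟩
  rw [mem_closedBall_zero_iff] at hv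
  simpa [norm_smul, abs_of_nonneg ht] using mul_le_of_le_one_right ht hv

end Normed

lemma exists_forall_le_infDist_add_smul [ProperSpace E] {B : Set E} (hB : IsClosed B) {w q : E}
    (hq : projSet B w = {q}) (hpos : 0 < infDist w B) {ε : ℝ} (hε : 0 < ε) (hε1 : ε ≤ 1) :
    ∃ u : E, ‖u‖ = 1 ∧ ∃ η₀ > 0, ∀ η ∈ Ico 0 η₀,
      infDist w B + (1 - ε) * η ≤ infDist (w + η • u) B := by
  set D := infDist w B
  have hqw : q ∈ projSet B w := by rw [hq]; rfl
  set u := D⁻¹ • (w - q)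
  have hu : ‖u‖ = 1 := by
    rw [norm_smul, hqw.2, norm_inv, Real.norm_of_nonneg hpos.le, inv_mul_cancel₀ hpos.ne']
  have huq : ⟪u, w - q⟫ = D := by
    rw [real_inner_smul_left, real_inner_self_eq_norm_sq, hqw.2, sq, ← mul_assoc,
      inv_mul_cancel₀ hpos.ne', one_mul]
  obtain ⟨η₀, hη₀, hcont⟩ :=
    exists_forall_norm_sub_lt_of_projSet_eq_singleton hB hq (mul_pos hε hpos)
  refine ⟨u, hu, η₀, hη₀, fun η ⟨hη0, hη⟩ => ?_⟩
  obtain ⟨q', hq'⟩ := projSet_nonempty hB ⟨q, hqw.1⟩ (w + η • u)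
  have hq'q : ‖q' - q‖ < ε * D :=
    hcont _ (by rwa [add_sub_cancel_left, norm_smul, hu, mul_one, Real.norm_of_nonneg hη0]) q' hq'
  have hDq' : D ≤ ‖w - q'‖ := dist_eq_norm w q' ▸ infDist_le_dist_of_mem hq'.1
  have hinner : D - ε * D ≤ ⟪u, w - q'⟫ := by
    have hcs : ⟪u, q' - q⟫ ≤ ‖q' - q‖ := by simpa [hu] using real_inner_le_norm u (q' - q)
    have hsplit : ⟪u, w - q'⟫ = ⟪u, w - q⟫ - ⟪u, q' - q⟫ := by
      rw [← inner_sub_right, sub_sub_sub_cancel_right]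
    linarith
  have hsq : ‖w + η • u - q'‖ ^ 2 = ‖w - q'‖ ^ 2 + 2 * η * ⟪u, w - q'⟫ + η ^ 2 := by
    rw [add_sub_right_comm, norm_add_sq_real, real_inner_smul_right, real_inner_comm, norm_smul,
      hu, mul_one, Real.norm_of_nonneg hη0]
    ring
  rw [← hq'.2]
  refine (pow_le_pow_iff_left₀ (by nlinarith) (norm_nonneg _) two_ne_zero).1 ?_
  nlinarith [mul_le_mul_of_nonneg_left hinner hη0, mul_nonneg hε.le (mul_nonneg hη0 hη0)]

lemma infDist_add_sub_mul_le_ballMaxInfDist [ProperSpace E] {B : Set E} (hB : IsClosed B)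
    {a : E} {T ε : ℝ} (hT : 0 ≤ T) (hpos : 0 < infDist a B) (hε : 0 < ε) (hε1 : ε ≤ 1)
    (huniq : ∀ y ∈ closedBall a T, ∃ p, projSet B y = {p}) :
    infDist a B + (1 - ε) * T ≤ ballMaxInfDist B a T := by
  set s := {t | infDist a B + (1 - ε) * t ≤ ballMaxInfDist B a t}
  have hs : IsClosed (s ∩ Icc 0 T) :=
    (isClosed_le (by fun_prop) (continuous_ballMaxInfDist B a)).inter isClosed_Icc
  have h0 : (0 : ℝ) ∈ s := by
    simpa [s] using infDist_le_ballMaxInfDist (B := B) (sub_self a ▸ norm_zero.le)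
  -- From a maximiser `w` for radius `x`, a short step along the normal of `w` stays within
  -- radius `x + η` and raises `d_B` by `(1 - ε) η`.
  refine hs.Icc_subset_of_forall_exists_gt h0 ?_ ⟨hT, le_rfl⟩
  rintro x ⟨hxs : infDist a B + (1 - ε) * x ≤ _, hx0, hxT⟩ y (hxy : x < y)
  obtain ⟨w, hwa, hw⟩ := exists_infDist_eq_ballMaxInfDist B a hx0
  have hwpos : 0 < infDist w B := by nlinarith
  obtain ⟨q, hq⟩ := huniq w (mem_closedBall_iff_norm.2 (by linarith))
  obtain ⟨u, hu, η₀, hη₀, hgrow⟩ := exists_forall_le_infDist_add_smul hB hq hwpos hε hε1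
  have hη : 0 < min (η₀ / 2) (y - x) := lt_min (by linarith) (by linarith)
  set η := min (η₀ / 2) (y - x)
  refine ⟨x + η, ?_, by linarith, by linarith [min_le_right (η₀ / 2) (y - x)]⟩
  have hwu : ‖w + η • u - a‖ ≤ x + η := by
    rw [add_sub_right_comm]
    refine (norm_add_le _ _).trans ?_
    rw [norm_smul, hu, mul_one, Real.norm_of_nonneg hη.le]
    linarith
  calc infDist a B + (1 - ε) * (x + η) = infDist a B + (1 - ε) * x + (1 - ε) * η := by ring
    _ ≤ infDist w B + (1 - ε) * η := by rw [hw]; linarith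
    _ ≤ infDist (w + η • u) B :=
      hgrow η ⟨hη.le, (min_le_left _ _).trans_lt (by linarith)⟩
    _ ≤ ballMaxInfDist B a (x + η) := infDist_le_ballMaxInfDist hwu

lemma infDist_add_le_ballMaxInfDist [ProperSpace E] {B : Set E} (hB : IsClosed B) {a : E}
    {T : ℝ} (hT : 0 ≤ T) (hpos : 0 < infDist a B)
    (huniq : ∀ y ∈ closedBall a T, ∃ p, projSet B y = {p}) :
    infDist a B + T ≤ ballMaxInfDist B a T := by
  have hlim : Tendsto (fun ε : ℝ => infDist a B + (1 - ε) * T) (𝓝[>] 0)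
      (𝓝 (infDist a B + T)) := by
    have : Continuous fun ε : ℝ => infDist a B + (1 - ε) * T := by fun_prop
    simpa using (this.tendsto 0).mono_left nhdsWithin_le_nhds
  exact le_of_tendsto hlim (eventually_of_mem (Ioc_mem_nhdsGT one_pos) fun ε ⟨hε, hε1⟩ =>
    infDist_add_sub_mul_le_ballMaxInfDist hB hT hpos hε hε1 huniq)

lemma two_mul_inner_le_of_forall_le_norm_sub {B : Set E} {w a b' b : E} {T : ℝ} (hb' : b' ∈ B)
    (hb : b ∈ B) (hwa : ‖w - a‖ ≤ T) (hw : ∀ x ∈ B, ‖a - b'‖ + T ≤ ‖w - x‖) :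
    2 * T * ⟪a - b', b - b'⟫ ≤ ‖a - b'‖ * ‖b - b'‖ ^ 2 := by
  set r := ‖a - b'‖
  have htri := norm_sub_le_norm_sub_add_norm_sub w a b'
  have hwb' : ‖w - b'‖ = r + T := le_antisymm (by linarith) (hw b' hb')
  have hwaT : ‖w - a‖ = T := by linarith [hw b' hb']
  have hcol : r • (w - a) = T • (a - b') := by
    rw [← hwaT]
    exact norm_add_eq_iff_real.1 (by rw [sub_add_sub_cancel, hwb', hwaT, add_comm])
  have hinner : r * ⟪w - b', b - b'⟫ = (r + T) * ⟪a - b', b - b'⟫ := by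
    rw [← real_inner_smul_left, ← real_inner_smul_left, ← sub_add_sub_cancel w a b', smul_add,
      hcol, ← add_smul, add_comm T]
  have hball : 2 * ⟪w - b', b - b'⟫ ≤ ‖b - b'‖ ^ 2 := by
    have hsq : ‖w - b‖ ^ 2 = ‖w - b'‖ ^ 2 - 2 * ⟪w - b', b - b'⟫ + ‖b - b'‖ ^ 2 := by
      rw [← norm_sub_sq_real, sub_sub_sub_cancel_right]
    have hfar := hw b hb
    nlinarith [norm_nonneg (a - b'), (norm_nonneg _).trans hwa]
  have hT : 0 ≤ T := (norm_nonneg _).trans hwa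
  rcases le_or_gt ⟪a - b', b - b'⟫ 0 with hneg | hpos
  · nlinarith [norm_nonneg (a - b'), sq_nonneg ‖b - b'‖]
  · nlinarith [norm_nonneg (a - b')]

lemma two_mul_inner_le_of_forall_projSet_eq_singleton [ProperSpace E] {B : Set E}
    (hB : IsClosed B) {a b' b : E} {T : ℝ} (hT : 0 ≤ T)
    (huniq : ∀ y ∈ closedBall a T, ∃ p, projSet B y = {p}) (hb' : b' ∈ projSet B a)
    (hb : b ∈ B) : 2 * T * ⟪a - b', b - b'⟫ ≤ ‖a - b'‖ * ‖b - b'‖ ^ 2 := by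
  rcases (norm_nonneg (a - b')).eq_or_lt with h0 | hpos
  · simp [norm_eq_zero.1 h0.symm]
  rw [hb'.2] at hpos
  obtain ⟨w, hwa, hw⟩ := exists_infDist_eq_ballMaxInfDist B a hT
  have hescape := infDist_add_le_ballMaxInfDist hB hT hpos huniq
  refine two_mul_inner_le_of_forall_le_norm_sub hb'.1 hb hwa fun x hx => ?_
  calc ‖a - b'‖ + T = infDist a B + T := by rw [hb'.2]
    _ ≤ infDist w B := hw ▸ hescape
    _ ≤ ‖w - x‖ := dist_eq_norm w x ▸ infDist_le_dist_of_mem hx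

lemma holderRegular_of_forall_inner_le {A B : Set E} {bs : E} {σ c κ ρ : ℝ} (hσ : σ < 1)
    (hc : 0 < c) (hκ : 0 < κ) (hρ : 0 < ρ)
    (hineq : ∀ a ∈ ball bs ρ, ∀ b' ∈ projSet B a, ∀ b ∈ B,
      κ * ⟪a - b', b - b'⟫ ≤ ‖a - b'‖ * ‖b - b'‖ ^ 2) :
    HolderRegular A B bs σ c := by
  have hsmall : ∀ᶠ r in 𝓝 (0 : ℝ), (2 + c) * r ^ (1 - σ) < κ * Real.sqrt c := by
    have hcont : ContinuousAt (fun r : ℝ => (2 + c) * r ^ (1 - σ)) 0 :=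
      continuousAt_const.mul (Real.continuousAt_rpow_const 0 _ (Or.inr (by linarith)))
    refine hcont.eventually (gt_mem_nhds ?_)
    dsimp only
    rw [Real.zero_rpow (by linarith : 1 - σ ≠ 0), mul_zero]
    positivity
  obtain ⟨ε, hε, hεr⟩ := Metric.eventually_nhds_iff.1 hsmall
  refine ⟨ball bs (min ρ (ε / 2)), ball_mem_nhds _ (by positivity), ?_⟩
  rintro a ⟨-, ha⟩ b' ⟨hb', hb'U⟩ b hb hba -
  set r := ‖a - b'‖
  have hr : r < ε := by
    rw [mem_ball, dist_eq_norm] at ha hb'U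
    have := norm_sub_le_norm_sub_add_norm_sub a bs b'
    rw [norm_sub_rev bs b'] at this
    linarith [min_le_right ρ (ε / 2)]
  have hbb' : ‖b - b'‖ ≤ (2 + c) * r := by
    linarith [norm_sub_le_norm_sub_add_norm_sub b a b']
  have hsplit : r * r = r ^ (1 - σ) * r ^ (σ + 1) := by
    rw [← Real.rpow_add' (norm_nonneg _) (by ring_nf; norm_num),
      show 1 - σ + (σ + 1) = (2 : ℝ) by ring, Real.rpow_two, sq]
  refine le_of_mul_le_mul_left ?_ hκ
  calc κ * ⟪a - b', b - b'⟫ ≤ r * ‖b - b'‖ ^ 2 :=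
        hineq a (ball_subset_ball (min_le_left _ _) ha) b' hb' b hb
    _ ≤ r * ((2 + c) * r) * ‖b - b'‖ := by rw [sq, ← mul_assoc]; gcongr
    _ = (2 + c) * r ^ (1 - σ) * (r ^ (σ + 1) * ‖b - b'‖) := by
        linear_combination (2 + c) * ‖b - b'‖ * hsplit
    _ ≤ κ * Real.sqrt c * (r ^ (σ + 1) * ‖b - b'‖) := by
        refine mul_le_mul_of_nonneg_right (hεr ?_).le (by positivity)
        rwa [Real.dist_0_eq_abs, abs_of_nonneg (norm_nonneg _)]
    _ = κ * (Real.sqrt c * r ^ (σ + 1) * ‖b - b'‖) := by ring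

theorem stmt8_general {n : ℕ} (A B : Set (EuclideanSpace ℝ (Fin n))) (hBc : IsClosed B)
    (bs : EuclideanSpace ℝ (Fin n)) (hprox : ProxRegularAt B bs) :
    ∀ σ : ℝ, 0 ≤ σ → σ < 1 → ∀ cbar : ℝ, 0 < cbar →
      ∃ c : ℝ, 0 < c ∧ c < cbar ∧ HolderRegular A B bs σ c := by
  intro σ _ hσ cbar hcbar
  obtain ⟨U, hU, huniq⟩ := hprox
  obtain ⟨ε₀, hε₀, hball⟩ := nhds_basis_closedBall.mem_iff.1 hU
  refine ⟨cbar / 2, by positivity, by linarith, holderRegular_of_forall_inner_le hσ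
    (by positivity) (by positivity : 0 < 2 * (ε₀ / 2)) (by positivity : 0 < ε₀ / 2) ?_⟩
  intro a ha b' hb' b hb
  refine two_mul_inner_le_of_forall_projSet_eq_singleton hBc (by positivity)
    (fun y hy => huniq y (hball ?_)) hb' hb
  exact closedBall_subset_closedBall' (by rw [mem_ball] at ha; linarith) hy

theorem stmt8 {n : ℕ} (A B : Set (EuclideanSpace ℝ (Fin n)))
    (hAne : A.Nonempty) (hBne : B.Nonempty) (hAc : IsClosed A) (hBc : IsClosed B)
    (bs : EuclideanSpace ℝ (Fin n)) (hbs : bs ∈ A ∩ B)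
    (hprox : ProxRegularAt B bs) :
    ∀ σ : ℝ, 0 ≤ σ → σ < 1 → ∀ cbar : ℝ, 0 < cbar →
      ∃ c : ℝ, 0 < c ∧ c < cbar ∧ HolderRegular A B bs σ c :=
  stmt8_general A B hBc bs hprox
end

section
/- Let B be a closed subset of ℝⁿ that is σ'-Hölder amenable at x* ∈ B for some σ' ∈ (0,1]: there exist an open neighborhood U of x*, a continuously differentiable mapping G : ℝⁿ → ℝᵐ whose derivative DG is σ'-Hölder continuous, and a closed convex set C ⊆ ℝᵐ such that B ∩ U = {x ∈ U : G(x) ∈ C} and N_C(G(x*)) ∩ ker(DG(x*)ᵀ) = {0}, where N_C(y) = {v ∈ ℝᵐ : ⟨v, z − y⟩ ≤ 0 for all z ∈ C} is the convex normal cone. Then for every closed set A ⊆ ℝⁿ containing x*, every σ ∈ (0, σ'), and every constant c > 0, B is σ-Hölder regular with respect to A at x* with constant c. -/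
open Set Metric Filter Topology RealInnerProductSpace
open scoped ENNReal

variable {E : Type*} [NormedAddCommGroup E] [InnerProductSpace ℝ E]

/-!
The constraint qualification persists near `xs`: for `y` near `xs` and `p` near `G xs`, the adjoint
of `DG(y)` is bounded below by some `κ > 0` on the normal cone `N_C(p)` (compactness of the unit
sphere). Minimising `d_C(G ·) + (κ/2)‖· - x₀‖` then gives the local error bound
`d_B(x) ≤ L d_C(G x)`: at a minimiser `y` with `G y ∉ C`, moving along `-DG(y)ᵀ (G y - P_C(G y))`
would decrease the objective. Combined with the Hölder Taylor estimate and the convexity of `C`, the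
error bound shows that the points `b' + t (b - b')` of chords of `B` lie within
`O(t ‖b - b'‖ ^ (σ' + 1))` of `B`. If `b'` is a nearest point of `B` to `a'`, differentiating
`‖a' - b' - t (b - b')‖` at `t = 0⁺` gives `⟪a' - b', b - b'⟫ ≤ O(‖b - b'‖ ^ (σ' + 1)) ‖a' - b'‖`,
and since `‖b - b'‖ ≤ (2 + c) ‖a' - b'‖` this is at most `√c ‖a' - b'‖ ^ (σ + 1) ‖b - b'‖` as soon
as `‖a' - b'‖ ^ (σ' - σ)` is small.
-/

section

variable {F : Type*} [NormedAddCommGroup F] [InnerProductSpace ℝ F]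

def normalCone (C : Set F) (p : F) : Set F :=
  {w | ∀ z ∈ C, ⟪w, z - p⟫ ≤ 0}

theorem isClosed_normalCone (C : Set F) (p : F) : IsClosed (normalCone C p) := by
  simp only [normalCone, ofPred_forall]
  exact isClosed_biInter fun z _ => isClosed_le (by fun_prop) continuous_const

theorem smul_mem_normalCone {C : Set F} {p w : F} (hw : w ∈ normalCone C p) {a : ℝ}
    (ha : 0 ≤ a) : a • w ∈ normalCone C p := fun z hz => by
  rw [real_inner_smul_left]
  exact mul_nonpos_of_nonneg_of_nonpos ha (hw z hz)

theorem sub_mem_normalCone_of_norm_eq_infDist {C : Set F} (hC : Convex ℝ C) {x p : F}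
    (hp : p ∈ C) (hxp : ‖x - p‖ = infDist x C) : x - p ∈ normalCone C p := by
  refine (norm_eq_iInf_iff_real_inner_le_zero hC hp).1 ?_
  simp only [hxp, infDist_eq_iInf, dist_eq_norm]

theorem norm_image_sub_sub_fderiv_le_of_holder {V W : Type*} [NormedAddCommGroup V]
    [NormedSpace ℝ V] [NormedAddCommGroup W] [NormedSpace ℝ W] {G : V → W}
    (hG : Differentiable ℝ G) {K σ : ℝ} (hK : 0 ≤ K) (hσ : 0 ≤ σ)
    (hHold : ∀ x y, ‖fderiv ℝ G x - fderiv ℝ G y‖ ≤ K * ‖x - y‖ ^ σ) (x y : V) :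
    ‖G y - G x - fderiv ℝ G x (y - x)‖ ≤ K * ‖y - x‖ ^ σ * ‖y - x‖ := by
  refine (convex_closedBall x ‖y - x‖).norm_image_sub_le_of_norm_fderiv_le'
    (fun z _ => hG z) (fun z hz => ?_) (mem_closedBall_self (norm_nonneg _))
    (by simp [mem_closedBall, dist_eq_norm])
  rw [mem_closedBall, dist_eq_norm] at hz
  exact (hHold z x).trans (by gcongr)

theorem infDist_image_add_smul_sub_le {V W : Type*} [NormedAddCommGroup V] [NormedSpace ℝ V]
    [NormedAddCommGroup W] [NormedSpace ℝ W] {G : V → W} (hG : Differentiable ℝ G) {K σ : ℝ}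
    (hK : 0 ≤ K) (hσ : 0 ≤ σ)
    (hHold : ∀ x y, ‖fderiv ℝ G x - fderiv ℝ G y‖ ≤ K * ‖x - y‖ ^ σ) {C : Set W}
    (hC : Convex ℝ C) {x y : V} (hx : G x ∈ C) (hy : G y ∈ C) {t : ℝ} (ht : t ∈ Icc (0 : ℝ) 1) :
    infDist (G (x + t • (y - x))) C ≤ 2 * K * t * ‖y - x‖ ^ (σ + 1) := by
  set u := y - x
  set A := fderiv ℝ G x
  have htu : ‖t • u‖ = t * ‖u‖ := by rw [norm_smul, Real.norm_of_nonneg ht.1]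
  have hnear : ‖G (x + t • u) - G x - A (t • u)‖ ≤ K * ‖u‖ ^ σ * (t * ‖u‖) := by
    have := norm_image_sub_sub_fderiv_le_of_holder hG hK hσ hHold x (x + t • u)
    rw [add_sub_cancel_left, htu] at this
    have htu0 : 0 ≤ t * ‖u‖ := mul_nonneg ht.1 (norm_nonneg u)
    have hshort : t * ‖u‖ ≤ ‖u‖ := mul_le_of_le_one_left (norm_nonneg u) ht.2
    exact this.trans (mul_le_mul_of_nonneg_right
      (mul_le_mul_of_nonneg_left (Real.rpow_le_rpow htu0 hshort hσ) hK) htu0)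
  have hfar : ‖G y - G x - A u‖ ≤ K * ‖u‖ ^ σ * ‖u‖ :=
    norm_image_sub_sub_fderiv_le_of_holder hG hK hσ hHold x y
  have hsplit : G (x + t • u) - (G x + t • (G y - G x)) =
      (G (x + t • u) - G x - A (t • u)) - t • (G y - G x - A u) := by
    rw [map_smul]; module
  calc infDist (G (x + t • u)) C ≤ ‖G (x + t • u) - (G x + t • (G y - G x))‖ := by
        rw [← dist_eq_norm]; exact infDist_le_dist_of_mem (hC.add_smul_sub_mem hx hy ht)
    _ ≤ K * ‖u‖ ^ σ * (t * ‖u‖) + t * (K * ‖u‖ ^ σ * ‖u‖) := by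
        rw [hsplit]
        refine (norm_sub_le _ _).trans (add_le_add hnear ?_)
        rw [norm_smul, Real.norm_of_nonneg ht.1]
        exact mul_le_mul_of_nonneg_left hfar ht.1
    _ = 2 * K * t * ‖u‖ ^ (σ + 1) := by
        rw [Real.rpow_add_one' (norm_nonneg _) (by linarith)]; ring

theorem neg_mul_norm_le_inner_of_eventually_norm_le {γ : ℝ → F} {γ' : F}
    (hγ : HasDerivAt γ γ' 0) {c : ℝ} (hle : ∀ᶠ t in 𝓝[>] 0, ‖γ 0‖ ≤ ‖γ t‖ + c * t) :
    -(c * ‖γ 0‖) ≤ ⟪γ 0, γ'⟫ := by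
  rcases eq_or_ne (γ 0) 0 with h0 | h0
  · simp [h0]
  have hpos : 0 < ‖γ 0‖ := norm_pos_iff.2 h0
  have hderiv : HasDerivAt (fun t => ‖γ t‖ + c * t) (⟪γ 0, γ'⟫ / ‖γ 0‖ + c) 0 := by
    have hsqrt := hγ.norm_sq.sqrt (by positivity)
    simp only [Real.sqrt_sq (norm_nonneg _)] at hsqrt
    have hlin : HasDerivAt (fun t : ℝ => c * t) c 0 := by
      simpa using (hasDerivAt_id (0 : ℝ)).const_mul c
    refine (hsqrt.add hlin).congr_deriv ?_
    rw [mul_div_mul_left _ _ two_ne_zero]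
  have hslope : 0 ≤ ⟪γ 0, γ'⟫ / ‖γ 0‖ + c := by
    refine ge_of_tendsto ((hasDerivAt_iff_tendsto_slope.1 hderiv).mono_left
      (nhdsGT_le_nhdsNE 0)) ?_
    filter_upwards [hle, self_mem_nhdsWithin] with t ht (htpos : 0 < t)
    rw [slope_def_field]
    exact div_nonneg (by simp only [mul_zero, add_zero]; linarith) (by linarith)
  have := mul_nonneg hslope hpos.le
  rw [add_mul, div_mul_cancel₀ _ hpos.ne'] at this
  linarith

theorem exists_forall_add_mul_norm_sub_le {X : Type*} [NormedAddCommGroup X] [ProperSpace X]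
    {f : X → ℝ} (hf : Continuous f) (hf0 : ∀ x, 0 ≤ f x) {ε : ℝ} (hε : 0 < ε) (x₀ : X) :
    ∃ y, ∀ x, f y + ε * ‖y - x₀‖ ≤ f x + ε * ‖x - x₀‖ := by
  refine (hf.add (continuous_const.mul (continuous_id.sub continuous_const).norm)).exists_forall_le'
    x₀ ?_
  filter_upwards [(isCompact_closedBall x₀ (f x₀ / ε)).compl_mem_cocompact] with x hx
  rw [mem_compl_iff, mem_closedBall, dist_eq_norm, not_le, div_lt_iff₀ hε] at hx
  show f x₀ + ε * ‖x₀ - x₀‖ ≤ f x + ε * ‖x - x₀‖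
  rw [sub_self, norm_zero, mul_zero, add_zero]
  nlinarith [hf0 x]

theorem exists_pos_eventually_mul_norm_le_norm_adjoint [CompleteSpace E] [FiniteDimensional ℝ F]
    {X : Type*} [TopologicalSpace X] {T : X → E →L[ℝ] F} {x₀ : X} (hT : ContinuousAt T x₀)
    {C : Set F} {p₀ : F}
    (hCQ : normalCone C p₀ ∩ {v | ContinuousLinearMap.adjoint (T x₀) v = 0} = {0}) :
    ∃ κ > 0, ∀ᶠ q : X × F in 𝓝 (x₀, p₀), ∀ w ∈ normalCone C q.2,
      κ * ‖w‖ ≤ ‖ContinuousLinearMap.adjoint (T q.1) w‖ := by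
  obtain ⟨κ, hκ, hκK⟩ : ∃ κ, 0 < κ ∧ ∀ u ∈ sphere (0 : F) 1 ∩ normalCone C p₀,
      κ ≤ ‖ContinuousLinearMap.adjoint (T x₀) u‖ := by
    refine ((isCompact_sphere 0 1).inter_right (isClosed_normalCone C p₀)).exists_forall_le'
      (by fun_prop) fun u ⟨hu, hun⟩ => norm_pos_iff.2 fun h0 => ?_
    have : u ∈ ({0} : Set F) := hCQ ▸ ⟨hun, h0⟩
    rw [mem_singleton_iff.1 this, mem_sphere_zero_iff_norm, norm_zero] at hu
    exact zero_ne_one hu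
  have hsphere : ∀ᶠ q : X × F in 𝓝 (x₀, p₀), ∀ w ∈ sphere (0 : F) 1,
      w ∈ normalCone C q.2 → κ / 2 < ‖ContinuousLinearMap.adjoint (T q.1) w‖ := by
    refine (isCompact_sphere 0 1).eventually_forall_of_forall_eventually fun u hu => ?_
    by_cases hun : u ∈ normalCone C p₀
    · have hcont : ContinuousAt (fun z : (X × F) × F => ‖ContinuousLinearMap.adjoint (T z.1.1) z.2‖)
          ((x₀, p₀), u) :=
        ((ContinuousLinearMap.adjoint.continuous.continuousAt.comp
          (hT.comp continuousAt_fst.fst)).clm_apply continuousAt_snd).norm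
      filter_upwards [hcont.eventually (lt_mem_nhds ((half_lt_self hκ).trans_le
        (hκK u ⟨hu, hun⟩)))] with z hz _ using hz
    · simp only [normalCone, mem_ofPred_eq, not_forall, not_le] at hun
      obtain ⟨z, hz, hpos⟩ := hun
      have hcont : ContinuousAt (fun q : (X × F) × F => ⟪q.2, z - q.1.2⟫) ((x₀, p₀), u) := by
        fun_prop
      filter_upwards [hcont.eventually (lt_mem_nhds hpos)] with q hq hqn
      exact absurd (hqn z hz) (not_le.2 hq)
  refine ⟨κ / 2, half_pos hκ, hsphere.mono fun q hq w hw => ?_⟩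
  rcases eq_or_ne w 0 with rfl | hw0
  · simp
  have hpos : 0 < ‖w‖ := norm_pos_iff.2 hw0
  have := hq (‖w‖⁻¹ • w) (by simp [norm_smul, hpos.ne']) (smul_mem_normalCone hw (by positivity))
  rw [map_smul, norm_smul, norm_inv, norm_norm, ← div_eq_inv_mul, lt_div_iff₀ hpos] at this
  exact this.le

theorem eq_of_forall_infDist_add_mul_norm_sub_le [CompleteSpace E] [CompleteSpace F]
    {G : E → F} {C : Set F} {x₀ y : E} {p : F} {ε κ : ℝ} (hGy : DifferentiableAt ℝ G y)
    (hp : p ∈ C) (hpy : ‖G y - p‖ = infDist (G y) C)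
    (hmin : ∀ x, infDist (G y) C + ε * ‖y - x₀‖ ≤ infDist (G x) C + ε * ‖x - x₀‖)
    (hκ : κ * ‖G y - p‖ ≤ ‖ContinuousLinearMap.adjoint (fderiv ℝ G y) (G y - p)‖)
    (hε : 0 ≤ ε) (hεκ : ε < κ) : G y = p := by
  set A := fderiv ℝ G y
  set w := G y - p
  set h := -ContinuousLinearMap.adjoint A w
  have hline : HasDerivAt (fun t : ℝ => y + t • h) h 0 := by
    simpa using ((hasDerivAt_id (0 : ℝ)).smul_const h).const_add y
  have hγ : HasDerivAt (fun t : ℝ => G (y + t • h) - p) (A h) 0 :=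
    (hGy.hasFDerivAt.comp_hasDerivAt_of_eq 0 hline (by simp)).sub_const p
  have hle : ∀ᶠ t in 𝓝[>] (0 : ℝ), ‖G (y + (0 : ℝ) • h) - p‖ ≤
      ‖G (y + t • h) - p‖ + ε * ‖h‖ * t := by
    filter_upwards [self_mem_nhdsWithin] with t (ht : 0 < t)
    have hmove : ‖y + t • h - x₀‖ ≤ ‖y - x₀‖ + t * ‖h‖ := by
      calc ‖y + t • h - x₀‖ = ‖(y - x₀) + t • h‖ := by rw [add_sub_right_comm]
        _ ≤ ‖y - x₀‖ + ‖t • h‖ := norm_add_le _ _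
        _ = ‖y - x₀‖ + t * ‖h‖ := by rw [norm_smul, Real.norm_of_nonneg ht.le]
    have hdist : infDist (G (y + t • h)) C ≤ ‖G (y + t • h) - p‖ := by
      rw [← dist_eq_norm]; exact infDist_le_dist_of_mem hp
    rw [zero_smul, add_zero, hpy]
    nlinarith [hmin (y + t • h), mul_le_mul_of_nonneg_left hmove hε]
  have hfirst : -(ε * ‖h‖ * ‖w‖) ≤ ⟪w, A h⟫ := by
    simpa only [zero_smul, add_zero] using neg_mul_norm_le_inner_of_eventually_norm_le hγ hle
  rw [← ContinuousLinearMap.adjoint_inner_left, inner_neg_right, real_inner_self_eq_norm_sq,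
    norm_neg] at hfirst
  by_contra hne
  have hw : 0 < ‖w‖ := norm_pos_iff.2 (sub_ne_zero.2 hne)
  have hAw : 0 < ‖ContinuousLinearMap.adjoint A w‖ :=
    (mul_pos (hε.trans_lt hεκ) hw).trans_le hκ
  have : ‖ContinuousLinearMap.adjoint A w‖ ≤ ε * ‖w‖ := by nlinarith
  nlinarith [mul_lt_mul_of_pos_right hεκ hw]

theorem exists_pos_eventually_mul_norm_le_norm_adjoint_fderiv [CompleteSpace E]
    [FiniteDimensional ℝ F] {G : E → F} (hG : ContDiff ℝ 1 G) {C : Set F} {xs : E}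
    (hCQ : normalCone C (G xs) ∩ {v | ContinuousLinearMap.adjoint (fderiv ℝ G xs) v = 0} = {0}) :
    ∃ κ > 0, ∀ᶠ q : E × F in 𝓝 (xs, 0), ∀ w ∈ normalCone C (G q.1 + q.2),
      κ * ‖w‖ ≤ ‖ContinuousLinearMap.adjoint (fderiv ℝ G q.1) w‖ := by
  obtain ⟨κ, hκ, hstab⟩ := exists_pos_eventually_mul_norm_le_norm_adjoint
    (hG.continuous_fderiv one_ne_zero).continuousAt hCQ
  have hmap : Tendsto (fun q : E × F => (q.1, G q.1 + q.2)) (𝓝 (xs, 0)) (𝓝 (xs, G xs)) :=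
    (continuous_fst.prodMk ((hG.continuous.comp continuous_fst).add continuous_snd)).tendsto' _ _
      (by simp)
  exact ⟨κ, hκ, hmap.eventually hstab⟩

theorem exists_eventually_dist_le_mul_infDist [FiniteDimensional ℝ E] [FiniteDimensional ℝ F]
    {G : E → F} (hG : ContDiff ℝ 1 G) {C : Set F} (hCc : IsClosed C) (hCv : Convex ℝ C)
    {xs : E} (hxs : G xs ∈ C)
    (hCQ : normalCone C (G xs) ∩ {v | ContinuousLinearMap.adjoint (fderiv ℝ G xs) v = 0} = {0})
    {U : Set E} (hU : U ∈ 𝓝 xs) :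
    ∃ L ≥ 0, ∀ᶠ x in 𝓝 xs, ∃ y ∈ U, G y ∈ C ∧ dist x y ≤ L * infDist (G x) C := by
  obtain ⟨κ, hκ, hstab⟩ := exists_pos_eventually_mul_norm_le_norm_adjoint_fderiv hG hCQ
  obtain ⟨δ, hδ, hδloc⟩ := Metric.eventually_nhds_iff.1
    ((continuousAt_fst.eventually (show ∀ᶠ y in 𝓝 xs, y ∈ U from hU)).and hstab)
  set ε := κ / 2
  have hε : 0 < ε := half_pos hκ
  have hdc : Continuous fun x => infDist (G x) C := (continuous_infDist_pt C).comp hG.continuous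
  have hd : Tendsto (fun x => infDist (G x) C) (𝓝 xs) (𝓝 0) := by
    simpa [(hCc.mem_iff_infDist_zero ⟨_, hxs⟩).1 hxs] using hdc.tendsto xs
  refine ⟨ε⁻¹, by positivity, ?_⟩
  filter_upwards [ball_mem_nhds xs (half_pos hδ),
    hd.eventually (gt_mem_nhds (lt_min hδ (by positivity : 0 < ε * δ / 2)))] with x₀ hx₀ hs
  rw [mem_ball] at hx₀
  rw [lt_min_iff] at hs
  obtain ⟨y, hy⟩ := exists_forall_add_mul_norm_sub_le hdc (fun _ => infDist_nonneg) hε x₀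
  have hyx₀ := hy x₀
  rw [sub_self, norm_zero, mul_zero, add_zero] at hyx₀
  have hyx₀' : ‖y - x₀‖ ≤ ε⁻¹ * infDist (G x₀) C := by
    rw [← div_eq_inv_mul, le_div_iff₀ hε]; nlinarith [infDist_nonneg (x := G y) (s := C)]
  obtain ⟨p, hpC, hp⟩ := hCc.exists_infDist_eq_dist ⟨_, hxs⟩ (G y)
  have hpy : ‖G y - p‖ = infDist (G y) C := by rw [hp, dist_eq_norm]
  have hnear : dist (y, p - G y) (xs, 0) < δ := by
    rw [Prod.dist_eq, dist_zero_right, norm_sub_rev, hpy, max_lt_iff]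
    constructor
    · have : ε⁻¹ * infDist (G x₀) C < δ / 2 := by
        rw [← div_eq_inv_mul, div_lt_iff₀ hε]; linarith
      linarith [dist_triangle y x₀ xs, dist_eq_norm y x₀]
    · nlinarith [infDist_nonneg (x := G y) (s := C), mul_nonneg hε.le (norm_nonneg (y - x₀))]
  obtain ⟨hyU, hyκ⟩ := hδloc hnear
  rw [add_sub_cancel] at hyκ
  have hGyp : G y = p := eq_of_forall_infDist_add_mul_norm_sub_le
    ((hG.differentiable one_ne_zero) y) hpC hpy hy
    (hyκ _ (sub_mem_normalCone_of_norm_eq_infDist hCv hpC hpy)) hε.le (half_lt_self hκ)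
  exact ⟨y, hyU, hGyp ▸ hpC, by rw [dist_comm, dist_eq_norm]; exact hyx₀'⟩

def HasHolderChordBound (B : Set E) (x₀ : E) (τ : ℝ) : Prop :=
  ∃ M ≥ 0, ∃ δ > 0, ∀ b ∈ B ∩ ball x₀ δ, ∀ b' ∈ B ∩ ball x₀ δ, ∀ t ∈ Icc (0 : ℝ) 1,
    infDist (b' + t • (b - b')) B ≤ M * t * ‖b - b'‖ ^ (τ + 1)

theorem inner_le_of_eventually_infDist_add_smul_le {B : Set E} {a b b' : E}
    (hb' : ‖a - b'‖ = infDist a B) {ε : ℝ}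
    (hchord : ∀ᶠ t in 𝓝[>] 0, infDist (b' + t • (b - b')) B ≤ ε * t) :
    ⟪a - b', b - b'⟫ ≤ ε * ‖a - b'‖ := by
  have hγ : HasDerivAt (fun t : ℝ => a - (b' + t • (b - b'))) (-(b - b')) 0 := by
    simpa using (((hasDerivAt_id (0 : ℝ)).smul_const (b - b')).const_add b').const_sub a
  have hle : ∀ᶠ t in 𝓝[>] (0 : ℝ), ‖a - (b' + (0 : ℝ) • (b - b'))‖ ≤
      ‖a - (b' + t • (b - b'))‖ + ε * t := by
    filter_upwards [hchord] with t ht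
    rw [zero_smul, add_zero, hb', ← dist_eq_norm]
    linarith [infDist_le_infDist_add_dist (x := a) (y := b' + t • (b - b')) (s := B)]
  have := neg_mul_norm_le_inner_of_eventually_norm_le hγ hle
  simp only [zero_smul, add_zero, inner_neg_right] at this
  linarith

theorem holderRegular_of_hasHolderChordBound {B : Set E} {x₀ : E} {τ σ c : ℝ}
    (hB : HasHolderChordBound B x₀ τ) (hx₀ : x₀ ∈ B) (hτ : 0 ≤ τ) (hστ : σ < τ) (hc : 0 < c)
    (A : Set E) : HolderRegular A B x₀ σ c := by
  obtain ⟨M, hM, δ, hδ, hchord⟩ := hB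
  set N := M * (2 + c) ^ τ
  have hN : 0 ≤ N := by positivity
  obtain ⟨ρ, ⟨hρδ, hρN⟩, hρ⟩ : ∃ ρ, ((2 + c) * ρ < δ ∧ N * ρ ^ (τ - σ) < √c) ∧ 0 < ρ := by
    refine (Eventually.and ?_ self_mem_nhdsWithin).exists (f := 𝓝[>] (0 : ℝ))
    refine Eventually.filter_mono nhdsWithin_le_nhds (Eventually.and ?_ ?_)
    · exact (continuous_const.mul continuous_id).tendsto' 0 0 (by simp) |>.eventually
        (gt_mem_nhds hδ)
    · have hrpow := (Real.continuousAt_rpow_const 0 (τ - σ) (Or.inr (by linarith))).const_mul N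
      rw [ContinuousAt, Real.zero_rpow (by linarith), mul_zero] at hrpow
      exact hrpow.eventually (gt_mem_nhds (Real.sqrt_pos.2 hc))
  refine ⟨ball x₀ ρ, ball_mem_nhds x₀ hρ, ?_⟩
  rintro a ⟨-, ha⟩ b' ⟨⟨hb'B, hb'⟩, hb'ρ⟩ b hbB hba -
  rw [mem_ball] at ha hb'ρ
  set r := ‖a - b'‖
  set u := b - b'
  have hr : r < ρ := hb' ▸ (infDist_le_dist_of_mem hx₀).trans_lt ha
  have hu : ‖u‖ ≤ (2 + c) * r := by
    calc ‖u‖ = ‖(b - a) + (a - b')‖ := by rw [sub_add_sub_cancel]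
      _ ≤ (2 + c) * r := by linarith [norm_add_le (b - a) (a - b')]
  have hbδ : b ∈ ball x₀ δ := by
    rw [mem_ball]
    have := mul_le_mul_of_nonneg_left hr.le (by linarith : 0 ≤ 1 + c)
    linarith [dist_triangle b a x₀, dist_eq_norm b a]
  have hb'δ : b' ∈ ball x₀ δ := by rw [mem_ball]; nlinarith
  have hinner : ⟪a - b', u⟫ ≤ M * ‖u‖ ^ (τ + 1) * r := by
    refine inner_le_of_eventually_infDist_add_smul_le hb' ?_
    filter_upwards [Ioc_mem_nhdsGT one_pos] with t ht
    exact (hchord b ⟨hbB, hbδ⟩ b' ⟨hb'B, hb'δ⟩ t ⟨ht.1.le, ht.2⟩).trans_eq (by ring)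
  have hr0 : 0 ≤ r := norm_nonneg _
  calc ⟪a - b', u⟫ ≤ M * ‖u‖ ^ (τ + 1) * r := hinner
    _ = M * ‖u‖ ^ τ * r * ‖u‖ := by rw [Real.rpow_add_one' (norm_nonneg _) (by linarith)]; ring
    _ ≤ M * ((2 + c) * r) ^ τ * r * ‖u‖ := by gcongr
    _ = N * r ^ (τ - σ) * r ^ (σ + 1) * ‖u‖ := by
        have hsplit : r ^ τ * r = r ^ (τ - σ) * r ^ (σ + 1) := by
          rw [← Real.rpow_add_one' hr0 (by linarith), ← Real.rpow_add' hr0 (by linarith)]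
          ring_nf
        rw [Real.mul_rpow (by positivity) hr0]
        linear_combination (M * (2 + c) ^ τ * ‖u‖) * hsplit
    _ ≤ N * ρ ^ (τ - σ) * r ^ (σ + 1) * ‖u‖ := by gcongr
    _ ≤ √c * r ^ (σ + 1) * ‖u‖ := by gcongr

theorem hasHolderChordBound_of_eq_preimage [FiniteDimensional ℝ E] [FiniteDimensional ℝ F]
    {B U : Set E} {xs : E} (hxs : xs ∈ B) (hU : U ∈ 𝓝 xs) {G : E → F} (hG : ContDiff ℝ 1 G)
    {K τ : ℝ} (hτ : 0 ≤ τ) (hHold : ∀ x y, ‖fderiv ℝ G x - fderiv ℝ G y‖ ≤ K * ‖x - y‖ ^ τ)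
    {C : Set F} (hCc : IsClosed C) (hCv : Convex ℝ C) (hrep : B ∩ U = {x ∈ U | G x ∈ C})
    (hCQ : normalCone C (G xs) ∩ {v | ContinuousLinearMap.adjoint (fderiv ℝ G xs) v = 0} = {0}) :
    HasHolderChordBound B xs τ := by
  have hmemC : ∀ x ∈ B, x ∈ U → G x ∈ C := fun x hxB hxU =>
    (show x ∈ {x ∈ U | G x ∈ C} from hrep ▸ ⟨hxB, hxU⟩).2
  have hmemB : ∀ x ∈ U, G x ∈ C → x ∈ B := fun x hxU hxC =>
    (show x ∈ B ∩ U from hrep ▸ ⟨hxU, hxC⟩).1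
  obtain ⟨K', hK', hHold'⟩ : ∃ K' ≥ 0, ∀ x y, ‖fderiv ℝ G x - fderiv ℝ G y‖ ≤ K' * ‖x - y‖ ^ τ :=
    ⟨max K 0, le_max_right _ _, fun x y => (hHold x y).trans (by gcongr; exact le_max_left _ _)⟩
  obtain ⟨L, hL, hbound⟩ := exists_eventually_dist_le_mul_infDist hG hCc hCv
    (hmemC xs hxs (mem_of_mem_nhds hU)) hCQ hU
  obtain ⟨δ, hδ, hball⟩ := Metric.eventually_nhds_iff_ball.1 (hbound.and hU)
  refine ⟨2 * L * K', by positivity, δ, hδ, fun b ⟨hbB, hb⟩ b' ⟨hb'B, hb'⟩ t ht => ?_⟩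
  obtain ⟨⟨y, hyU, hyC, hy⟩, -⟩ := hball _ ((convex_ball xs δ).add_smul_sub_mem hb' hb ht)
  calc infDist (b' + t • (b - b')) B ≤ dist (b' + t • (b - b')) y :=
        infDist_le_dist_of_mem (hmemB y hyU hyC)
    _ ≤ L * (2 * K' * t * ‖b - b'‖ ^ (τ + 1)) := hy.trans (mul_le_mul_of_nonneg_left
        (infDist_image_add_smul_sub_le (hG.differentiable one_ne_zero) hK' hτ hHold' hCv
          (hmemC b' hb'B (hball b' hb').2) (hmemC b hbB (hball b hb).2) ht) hL)
    _ = 2 * L * K' * t * ‖b - b'‖ ^ (τ + 1) := by ring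

end

theorem stmt10_general {n m : ℕ} (B : Set (EuclideanSpace ℝ (Fin n)))
    (xs : EuclideanSpace ℝ (Fin n)) (hxsB : xs ∈ B)
    (σ' : ℝ) (hσ' : σ' ∈ Set.Ioc (0:ℝ) 1)
    (U : Set (EuclideanSpace ℝ (Fin n))) (hUo : IsOpen U) (hxU : xs ∈ U)
    (G : EuclideanSpace ℝ (Fin n) → EuclideanSpace ℝ (Fin m))
    (hG : ContDiff ℝ 1 G)
    (K : ℝ) (hHold : ∀ x y : EuclideanSpace ℝ (Fin n),
      ‖fderiv ℝ G x - fderiv ℝ G y‖ ≤ K * ‖x - y‖ ^ σ')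
    (C : Set (EuclideanSpace ℝ (Fin m))) (hCc : IsClosed C) (hCvx : Convex ℝ C)
    (hrep : B ∩ U = {x ∈ U | G x ∈ C})
    (hCQ : {v : EuclideanSpace ℝ (Fin m) | ∀ z ∈ C, ⟪v, z - G xs⟫ ≤ 0} ∩
           {v : EuclideanSpace ℝ (Fin m) |
              ContinuousLinearMap.adjoint (fderiv ℝ G xs) v = 0} = {0}) :
    ∀ A : Set (EuclideanSpace ℝ (Fin n)), IsClosed A → xs ∈ A →
      ∀ σ : ℝ, 0 < σ → σ < σ' → ∀ c : ℝ, 0 < c → HolderRegular A B xs σ c := by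
  intro A _ _ σ _ hσσ' c hc
  have hchord : HasHolderChordBound B xs σ' := hasHolderChordBound_of_eq_preimage hxsB
    (hUo.mem_nhds hxU) hG hσ'.1.le hHold hCc hCvx hrep hCQ
  exact holderRegular_of_hasHolderChordBound hchord hxsB hσ'.1.le hσσ' hc A

theorem stmt10 {n m : ℕ} (B : Set (EuclideanSpace ℝ (Fin n))) (hBne : B.Nonempty)
    (hBc : IsClosed B) (xs : EuclideanSpace ℝ (Fin n)) (hxsB : xs ∈ B)
    (σ' : ℝ) (hσ' : σ' ∈ Set.Ioc (0:ℝ) 1)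
    (U : Set (EuclideanSpace ℝ (Fin n))) (hUo : IsOpen U) (hxU : xs ∈ U)
    (G : EuclideanSpace ℝ (Fin n) → EuclideanSpace ℝ (Fin m))
    (hG : ContDiff ℝ 1 G)
    (K : ℝ) (hHold : ∀ x y : EuclideanSpace ℝ (Fin n),
      ‖fderiv ℝ G x - fderiv ℝ G y‖ ≤ K * ‖x - y‖ ^ σ')
    (C : Set (EuclideanSpace ℝ (Fin m))) (hCc : IsClosed C) (hCvx : Convex ℝ C)
    (hGxs : G xs ∈ C)
    (hrep : B ∩ U = {x ∈ U | G x ∈ C})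
    (hCQ : {v : EuclideanSpace ℝ (Fin m) | ∀ z ∈ C, ⟪v, z - G xs⟫ ≤ 0} ∩
           {v : EuclideanSpace ℝ (Fin m) |
              ContinuousLinearMap.adjoint (fderiv ℝ G xs) v = 0} = {0}) :
    ∀ A : Set (EuclideanSpace ℝ (Fin n)), IsClosed A → xs ∈ A →
      ∀ σ : ℝ, 0 < σ → σ < σ' → ∀ c : ℝ, 0 < c → HolderRegular A B xs σ c :=
  stmt10_general B xs hxsB σ' hσ' U hUo hxU G hG K hHold C hCc hCvx hrep hCQ
end

section
/- Let A and B be nonempty closed subsets of ℝⁿ, let b ∈ B, a⁺ ∈ P_A(b), b⁺ ∈ P_B(a⁺), and let ω ≥ 0, γ > 0. If ⟨b − a⁺, b⁺ − a⁺⟩ ≤ (1 − γ‖b⁺ − a⁺‖^ω)‖b − a⁺‖‖b⁺ − a⁺‖, then ‖b − b⁺‖² ≥ 2γ‖a⁺ − b⁺‖^{ω+2}. -/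
open Set Metric Filter Topology RealInnerProductSpace
open scoped ENNReal

variable {E : Type*} [NormedAddCommGroup E] [InnerProductSpace ℝ E]

theorem stmt13 {n : ℕ} (A B : Set (EuclideanSpace ℝ (Fin n)))
    (hAne : A.Nonempty) (hBne : B.Nonempty) (hAc : IsClosed A) (hBc : IsClosed B)
    (b a' b' : EuclideanSpace ℝ (Fin n)) (hb : b ∈ B) (ha' : a' ∈ projSet A b)
    (hb' : b' ∈ projSet B a')
    (ω γ : ℝ) (hω : 0 ≤ ω) (hγ : 0 < γ)
    (hangle : ⟪b - a', b' - a'⟫ ≤ (1 - γ * ‖b' - a'‖ ^ ω) * ‖b - a'‖ * ‖b' - a'‖) :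
    2 * γ * ‖a' - b'‖ ^ (ω + 2) ≤ ‖b - b'‖ ^ 2 := by
  set t : ℝ := ‖b' - a'‖ with ht
  have ht0 : 0 ≤ t := norm_nonneg _
  have hab : ‖a' - b'‖ = t := by rw [ht, norm_sub_rev]
  -- b' is nearest to a' in B, b ∈ B:
  have hle : t ≤ ‖b - a'‖ := by
    have h1 : ‖a' - b'‖ = Metric.infDist a' B := hb'.2
    have h2 : Metric.infDist a' B ≤ dist a' b := Metric.infDist_le_dist_of_mem hb
    rw [← hab]
    calc ‖a' - b'‖ ≤ dist a' b := h1 ▸ h2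
      _ = ‖b - a'‖ := by rw [dist_eq_norm, norm_sub_rev]
  have hexp : ‖b - b'‖ ^ 2 = ‖b - a'‖ ^ 2 - 2 * ⟪b - a', b' - a'⟫ + t ^ 2 := by
    have : b - b' = (b - a') - (b' - a') := by abel
    rw [this, ht, @norm_sub_sq_real]
  rcases eq_or_lt_of_le ht0 with h0 | h0
  · -- t = 0
    have : t ^ (ω + 2) = 0 := by
      rw [← h0]; exact Real.zero_rpow (by linarith)
    rw [hab, this, mul_zero]
    positivity
  · have hpow : t ^ (ω + 2) = t ^ ω * t ^ 2 := by
      rw [Real.rpow_add h0, Real.rpow_two]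
    have hωpos : 0 < t ^ ω := Real.rpow_pos_of_pos h0 ω
    have key : 2 * γ * (t ^ ω * t ^ 2) ≤ ‖b - b'‖ ^ 2 := by
      rw [hexp]
      have h1 : 2 * ⟪b - a', b' - a'⟫ ≤ 2 * ((1 - γ * t ^ ω) * ‖b - a'‖ * t) := by
        linarith
      have h2 : t * t ≤ ‖b - a'‖ * t := by nlinarith
      nlinarith [sq_nonneg (‖b - a'‖ - t)]
    rw [hab, hpow]; exact key
end

section
/- (Local linear convergence.) Let A and B be nonempty closed subsets of ℝⁿ and x* ∈ A ∩ B. Suppose A and B intersect 0-separably at x* with constant γ ∈ (0,2), and B is 0-Hölder regular with respect to A at x* with constant c < γ/2. Then there exists a neighborhood V of x* such that every sequence of alternating projections (a_k, b_k) between A and B that has at least one iterate in V converges R-linearly to a point b* ∈ A ∩ B, i.e., there exist C > 0 and q ∈ (0,1) with ‖b_k − b*‖ ≤ C·q^k for all k. -/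
/-!
With `r = ‖b - a⁺‖` and `s = ‖a⁺ - b⁺‖ ≤ r` along a building block `b → a⁺ → b⁺`, the law of
cosines turns 0-separability at `a⁺` and 0-Hölder regularity at `b⁺` into two quadratic
inequalities in `r`, `s`, `‖b - b⁺‖`; together they force `s ≤ q r` for a fixed `q < 1` depending
only on `γ` and `c`. Near `xs` the distances `d_A(b_k)` therefore decay geometrically, and since
`‖b_{k+1} - b_k‖ ≤ 2 d_A(b_k)`, the quantity `‖b_k - xs‖ + 2 d_A(b_k) / (1 - q)` does not increase,
so an orbit starting close enough to `xs` never leaves the neighbourhood where these estimates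
hold. Hence `(b_k)` is Cauchy with geometric rate and its limit lies in `A ∩ B`.
-/

open Set Metric Filter Topology RealInnerProductSpace
open scoped ENNReal

variable {E : Type*} [NormedAddCommGroup E] [InnerProductSpace ℝ E]

lemma le_geometric_of_local_contraction {X : Type*} [PseudoMetricSpace X] {x : ℕ → X}
    {r : ℕ → ℝ} {z : X} {ρ q : ℝ} (hq0 : 0 ≤ q) (hq1 : q < 1)
    (hdist : ∀ k, dist (x k) (x (k + 1)) ≤ r k)
    (hcontr : ∀ k, dist (x k) z + r k < ρ → r (k + 1) ≤ q * r k)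
    (h0 : dist (x 0) z + r 0 / (1 - q) < ρ) (k : ℕ) :
    r k ≤ r 0 * q ^ k := by
  have h1q : 0 < 1 - q := by linarith
  have hr : ∀ k, 0 ≤ r k := fun k => dist_nonneg.trans (hdist k)
  suffices ∀ k, dist (x k) z + r k / (1 - q) ≤ dist (x 0) z + r 0 / (1 - q) ∧
      r k ≤ r 0 * q ^ k from (this k).2
  intro k
  induction k with
  | zero => simp
  | succ k ih =>
    have hk : dist (x k) z + r k < ρ := by
      have : r k ≤ r k / (1 - q) := le_div_self (hr k) h1q (by linarith)
      linarith [ih.1]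
    have hstep := hcontr k hk
    refine ⟨?_, ?_⟩
    · have := dist_triangle (x (k + 1)) (x k) z
      rw [dist_comm (x (k + 1)) (x k)] at this
      have : r (k + 1) / (1 - q) ≤ q * r k / (1 - q) := by gcongr
      have : r k + q * r k / (1 - q) = r k / (1 - q) := by field_simp; ring
      linarith [hdist k, ih.1]
    · calc r (k + 1) ≤ q * r k := hstep
        _ ≤ q * (r 0 * q ^ k) := by gcongr; exact ih.2
        _ = r 0 * q ^ (k + 1) := by ring

lemma exists_pos_forall_le_mul_pow_of_add {f : ℕ → ℝ} {q : ℝ} (hq : 0 < q) (k₀ : ℕ) {C : ℝ}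
    (h : ∀ j, f (k₀ + j) ≤ C * q ^ j) : ∃ C' > 0, ∀ k, f k ≤ C' * q ^ k := by
  induction k₀ generalizing C with
  | zero =>
    refine ⟨max C 1, by positivity, fun k => ?_⟩
    simpa using (h k).trans (by gcongr; exact le_max_left _ _)
  | succ k₀ ih =>
    refine ih (C := max (f k₀) (C / q)) fun j => ?_
    cases j with
    | zero => simp
    | succ j =>
      calc f (k₀ + (j + 1)) ≤ C * q ^ j := by rw [Nat.add_comm j, ← Nat.add_assoc]; exact h j
        _ = C / q * q ^ (j + 1) := by field_simp; ring
        _ ≤ max (f k₀) (C / q) * q ^ (j + 1) := by gcongr; exact le_max_right _ _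

lemma le_mul_of_sep_of_holder {r s u σ γ : ℝ} (hσ : 0 ≤ σ) (hσγ : σ ^ 2 < γ / 2) (hγ : γ < 2)
    (hs : 0 < s) (hsr : s ≤ r)
    (hsep : r ^ 2 + s ^ 2 - 2 * (1 - γ) * r * s ≤ u ^ 2)
    (hreg : u ^ 2 + s ^ 2 - 2 * σ * s * u ≤ r ^ 2) :
    s ≤ (1 - (γ - 2 * σ ^ 2) ^ 2 / 8) * r := by
  set δ := γ - 2 * σ ^ 2
  have hδ0 : 0 < δ := by linarith
  have hδ2 : δ ≤ 2 := by nlinarith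
  have hr : 0 < r := hs.trans_le hsr
  have hσ1 : σ ≤ 1 := by nlinarith
  obtain ⟨w, hw0, hw⟩ : ∃ w, 0 ≤ w ∧ w ^ 2 = r ^ 2 - s ^ 2 :=
    ⟨√(r ^ 2 - s ^ 2), Real.sqrt_nonneg _, Real.sq_sqrt (by nlinarith)⟩
  -- `h1` is `hsep + hreg` divided by `2 s`; `h2` solves `hreg` as a quadratic inequality in `u`
  have h1 : s ≤ (1 - γ) * r + σ * u := by nlinarith
  have h2 : u ≤ σ * s + σ * r + w := by
    have h : (u - σ * s) ^ 2 ≤ (w + σ * r) ^ 2 := by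
      have hσs : (σ * s) ^ 2 ≤ (σ * r) ^ 2 :=
        pow_le_pow_left₀ (by positivity) (mul_le_mul_of_nonneg_left hsr hσ) 2
      nlinarith [mul_nonneg hw0 (mul_nonneg hσ hr.le)]
    linarith [(abs_le_of_sq_le_sq' h (by positivity)).2]
  have h3 : δ * r ≤ (r - s) + w := by nlinarith [mul_le_mul_of_nonneg_left h2 hσ]
  have h4 : w ^ 2 ≤ 2 * r * (r - s) := by nlinarith
  rcases le_total (δ * r / 2) (r - s) with h | h
  · nlinarith
  · nlinarith [mul_le_mul h (by linarith : δ * r / 2 ≤ r - s + w) (by positivity) (by positivity)]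

noncomputable def sepHolderRate (γ c : ℝ) : ℝ := max (1 / (1 + c)) (1 - (γ - 2 * c) ^ 2 / 8)

lemma sepHolderRate_pos {γ c : ℝ} (hc : 0 < c) : 0 < sepHolderRate γ c :=
  lt_max_of_lt_left (by positivity)

lemma sepHolderRate_lt_one {γ c : ℝ} (hc : 0 < c) (hcγ : c < γ / 2) : sepHolderRate γ c < 1 :=
  max_lt ((div_lt_one (by linarith)).2 (by linarith))
    (by nlinarith [pow_pos (by linarith : 0 < γ - 2 * c) 2])

lemma norm_sub_le_sepHolderRate_mul {b a' b' : E} {γ c : ℝ} (hγ : γ < 2) (hc : 0 < c)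
    (hcγ : c < γ / 2) (hsr : ‖a' - b'‖ ≤ ‖b - a'‖)
    (hsep : ⟪b - a', b' - a'⟫ ≤ (1 - γ) * ‖b - a'‖ * ‖b' - a'‖)
    (hreg : ‖b - a'‖ ≤ (1 + c) * ‖a' - b'‖ →
      ⟪a' - b', b - b'⟫ ≤ √c * ‖a' - b'‖ * ‖b - b'‖) :
    ‖a' - b'‖ ≤ sepHolderRate γ c * ‖b - a'‖ := by
  have hcos₁ : ‖b - b'‖ ^ 2 = ‖b - a'‖ ^ 2 - 2 * ⟪b - a', b' - a'⟫ + ‖a' - b'‖ ^ 2 := by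
    rw [norm_sub_rev a' b', ← norm_sub_sq_real, sub_sub_sub_cancel_right]
  have hcos₂ : ‖b - a'‖ ^ 2 = ‖b - b'‖ ^ 2 - 2 * ⟪a' - b', b - b'⟫ + ‖a' - b'‖ ^ 2 := by
    rw [real_inner_comm, ← norm_sub_sq_real, sub_sub_sub_cancel_right]
  rw [norm_sub_rev b' a'] at hsep
  set r := ‖b - a'‖
  set s := ‖a' - b'‖
  rcases (show 0 ≤ s from norm_nonneg _).eq_or_lt with hs | hs
  · rw [← hs]
    exact mul_nonneg (sepHolderRate_pos hc).le (norm_nonneg _)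
  rcases lt_or_ge ((1 + c) * s) r with hfar | hnear
  · calc s ≤ 1 / (1 + c) * r := by
          rw [div_mul_eq_mul_div, le_div_iff₀ (by positivity)]; linarith
      _ ≤ sepHolderRate γ c * r := by gcongr; exact le_max_left _ _
  have hσ : √c ^ 2 = c := Real.sq_sqrt hc.le
  have key := le_mul_of_sep_of_holder (u := ‖b - b'‖) (Real.sqrt_nonneg c) (by rwa [hσ]) hγ hs hsr
    (by nlinarith) (by nlinarith [hreg hnear])
  rw [hσ] at key
  exact key.trans (by gcongr; exact le_max_right _ _)

omit [InnerProductSpace ℝ E] in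
lemma dist_le_of_mem_projSet {S : Set E} {x s y : E} (hs : s ∈ projSet S x) (hy : y ∈ S) :
    dist x s ≤ dist x y := by
  rw [dist_eq_norm, hs.2]
  exact infDist_le_dist_of_mem hy

omit [InnerProductSpace ℝ E] in
lemma dist_le_two_mul_of_mem_projSet {S : Set E} {x s y : E} (hs : s ∈ projSet S x)
    (hy : y ∈ S) : dist y s ≤ 2 * dist y x := by
  linarith [dist_triangle y x s, dist_le_of_mem_projSet hs hy, dist_comm x y]

section AlternatingProjections

variable {A B : Set E} {a b : ℕ → E} {xs : E} {ρ q : ℝ}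

omit [InnerProductSpace ℝ E] in
lemma dist_le_mul_pow_of_mem_projSet (hb : ∀ k, b k ∈ projSet B (a k))
    (ha : ∀ k, a (k + 1) ∈ projSet A (b k)) (hxs : xs ∈ A) (hq0 : 0 ≤ q) (hq1 : q < 1)
    (hstep : ∀ k, b k ∈ ball xs ρ → a (k + 1) ∈ ball xs ρ → b (k + 1) ∈ ball xs ρ →
      dist (a (k + 1)) (b (k + 1)) ≤ q * dist (b k) (a (k + 1)))
    (h0 : dist (b 0) xs < (1 - q) * ρ / 4) (k : ℕ) :
    dist (b k) (a (k + 1)) ≤ dist (b 0) (a 1) * q ^ k := by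
  have hdist : ∀ k, dist (b k) (b (k + 1)) ≤ 2 * dist (b k) (a (k + 1)) := fun k =>
    dist_le_two_mul_of_mem_projSet (hb (k + 1)) (hb k).1
  have hcontr : ∀ k, dist (b k) xs + 2 * dist (b k) (a (k + 1)) < ρ →
      2 * dist (b (k + 1)) (a (k + 1 + 1)) ≤ q * (2 * dist (b k) (a (k + 1))) := by
    intro k hk
    have hba : 0 ≤ dist (b k) (a (k + 1)) := dist_nonneg
    have hbk : b k ∈ ball xs ρ := mem_ball.2 (by linarith)
    have hak : a (k + 1) ∈ ball xs ρ :=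
      mem_ball.2 (by linarith [dist_triangle_left (a (k + 1)) xs (b k)])
    have hbk' : b (k + 1) ∈ ball xs ρ :=
      mem_ball.2 (by linarith [dist_triangle_left (b (k + 1)) xs (b k), hdist k])
    linarith [dist_le_of_mem_projSet (ha (k + 1)) (ha k).1, dist_comm (b (k + 1)) (a (k + 1)),
      hstep k hbk hak hbk']
  have h0' : dist (b 0) xs + 2 * dist (b 0) (a 1) / (1 - q) < ρ := by
    have hρ : 0 < ρ := by
      by_contra! h
      nlinarith [dist_nonneg (x := b 0) (y := xs)]
    have : 2 * dist (b 0) (a 1) / (1 - q) < ρ / 2 := by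
      rw [div_lt_iff₀ (by linarith)]
      linarith [dist_le_of_mem_projSet (ha 0) hxs]
    nlinarith [mul_nonneg hq0 hρ.le]
  have := le_geometric_of_local_contraction (r := fun k => 2 * dist (b k) (a (k + 1))) hq0 hq1
    hdist hcontr h0' k
  linarith

omit [InnerProductSpace ℝ E] in
theorem exists_mem_inter_norm_sub_le_mul_pow [CompleteSpace E] (hA : IsClosed A)
    (hB : IsClosed B) (hb : ∀ k, b k ∈ projSet B (a k)) (ha : ∀ k, a (k + 1) ∈ projSet A (b k))
    (hxs : xs ∈ A) (hq0 : 0 ≤ q) (hq1 : q < 1)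
    (hstep : ∀ k, b k ∈ ball xs ρ → a (k + 1) ∈ ball xs ρ → b (k + 1) ∈ ball xs ρ →
      dist (a (k + 1)) (b (k + 1)) ≤ q * dist (b k) (a (k + 1)))
    (h0 : dist (b 0) xs < (1 - q) * ρ / 4) :
    ∃ p ∈ A ∩ B, ∃ C, ∀ k, ‖b k - p‖ ≤ C * q ^ k := by
  have hgeo := dist_le_mul_pow_of_mem_projSet hb ha hxs hq0 hq1 hstep h0
  set d := dist (b 0) (a 1)
  have hbd : ∀ k, dist (b k) (b (k + 1)) ≤ 2 * d * q ^ k := fun k => by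
    linarith [dist_le_two_mul_of_mem_projSet (hb (k + 1)) (hb k).1, hgeo k]
  obtain ⟨p, hp⟩ := cauchySeq_tendsto_of_complete (cauchySeq_of_le_geometric q _ hq1 hbd)
  have hpA : p ∈ A := by
    refine hA.mem_of_tendsto (f := fun k => a (k + 1)) (hp.congr_dist ?_)
      (.of_forall fun k => (ha k).1)
    exact squeeze_zero (fun _ => dist_nonneg) hgeo
      (by simpa using (tendsto_pow_atTop_nhds_zero_of_lt_one hq0 hq1).const_mul d)
  refine ⟨p, ⟨hpA, hB.mem_of_tendsto hp (.of_forall fun k => (hb k).1)⟩, 2 * d / (1 - q),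
    fun k => ?_⟩
  rw [← dist_eq_norm, div_mul_eq_mul_div]
  exact dist_le_of_le_geometric_of_tendsto q _ hq1 hbd hp k

end AlternatingProjections

theorem stmt16_general {n : ℕ} (A B : Set (EuclideanSpace ℝ (Fin n)))
    (hAc : IsClosed A) (hBc : IsClosed B)
    (xs : EuclideanSpace ℝ (Fin n)) (hxs : xs ∈ A ∩ B)
    (γ c : ℝ) (hγ : γ ∈ Set.Ioo (0:ℝ) 2) (hc : 0 < c) (hcγ : c < γ / 2)
    (U : Set (EuclideanSpace ℝ (Fin n))) (hU : U ∈ nhds xs)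
    (hsep₁ : ∀ b a' b' : EuclideanSpace ℝ (Fin n), b ∈ B → a' ∈ projSet A b →
      b' ∈ projSet B a' → b ∈ U → a' ∈ U → b' ∈ U →
      ⟪b - a', b' - a'⟫ ≤ (1 - γ) * ‖b - a'‖ * ‖b' - a'‖)
    (hreg : HolderRegular A B xs 0 c) :
    ∃ V ∈ nhds xs, ∀ a b : ℕ → EuclideanSpace ℝ (Fin n),
      (∀ k, b k ∈ projSet B (a k)) → (∀ k, a (k + 1) ∈ projSet A (b k)) →
      (∃ k, a k ∈ V ∨ b k ∈ V) →
      ∃ p ∈ A ∩ B, Filter.Tendsto b Filter.atTop (nhds p) ∧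
        ∃ C : ℝ, 0 < C ∧ ∃ q : ℝ, 0 < q ∧ q < 1 ∧
          ∀ k : ℕ, ‖b k - p‖ ≤ C * q ^ k := by
  obtain ⟨U', hU', hreg⟩ := hreg
  obtain ⟨ρ, hρ, hball⟩ := Metric.mem_nhds_iff.1 (inter_mem hU hU')
  set q := sepHolderRate γ c
  have hq0 : 0 < q := sepHolderRate_pos hc
  have hq1 : q < 1 := sepHolderRate_lt_one hc hcγ
  have hε : 0 < (1 - q) * ρ / 8 := by have := sub_pos.2 hq1; positivity
  refine ⟨ball xs ((1 - q) * ρ / 8), ball_mem_nhds _ hε, ?_⟩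
  rintro a b hb ha ⟨k₀, hk₀⟩
  have hnear : dist (b k₀) xs < (1 - q) * ρ / 4 := by
    rcases hk₀ with hk | hk
    · linarith [dist_le_two_mul_of_mem_projSet (hb k₀) hxs.2, mem_ball.1 hk, dist_comm xs (b k₀),
        dist_comm xs (a k₀)]
    · linarith [mem_ball.1 hk]
  have hstep : ∀ k, b k ∈ ball xs ρ → a (k + 1) ∈ ball xs ρ → b (k + 1) ∈ ball xs ρ →
      dist (a (k + 1)) (b (k + 1)) ≤ q * dist (b k) (a (k + 1)) := by
    intro k hbk hak hbk'
    rw [dist_eq_norm, dist_eq_norm]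
    refine norm_sub_le_sepHolderRate_mul hγ.2 hc hcγ ?_
      (hsep₁ _ _ _ (hb k).1 (ha k) (hb _) (hball hbk).1 (hball hak).1 (hball hbk').1) fun h => ?_
    · rw [← dist_eq_norm, ← dist_eq_norm, dist_comm (b k)]
      exact dist_le_of_mem_projSet (hb _) (hb k).1
    · simpa using hreg _ ⟨(ha k).1, (hball hak).2⟩ _ ⟨hb _, (hball hbk').2⟩ _ (hb k).1 h (ha k)
  obtain ⟨p, hp, C, hC⟩ := exists_mem_inter_norm_sub_le_mul_pow hAc hBc
    (a := fun j => a (k₀ + j)) (b := fun j => b (k₀ + j)) (fun j => hb _) (fun j => ha _) hxs.1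
    hq0.le hq1 (fun j => hstep (k₀ + j)) hnear
  obtain ⟨C', hC', hbound⟩ :=
    exists_pos_forall_le_mul_pow_of_add (f := fun k => ‖b k - p‖) hq0 k₀ hC
  refine ⟨p, hp, tendsto_iff_norm_sub_tendsto_zero.2 ?_, C', hC', q, hq0, hq1, hbound⟩
  exact squeeze_zero (fun _ => norm_nonneg _) hbound
    (by simpa using (tendsto_pow_atTop_nhds_zero_of_lt_one hq0.le hq1).const_mul C')

theorem stmt16 {n : ℕ} (A B : Set (EuclideanSpace ℝ (Fin n)))
    (hAne : A.Nonempty) (hBne : B.Nonempty) (hAc : IsClosed A) (hBc : IsClosed B)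
    (xs : EuclideanSpace ℝ (Fin n)) (hxs : xs ∈ A ∩ B)
    (γ c : ℝ) (hγ : γ ∈ Set.Ioo (0:ℝ) 2) (hc : 0 < c) (hcγ : c < γ / 2)
    (U : Set (EuclideanSpace ℝ (Fin n))) (hU : U ∈ nhds xs)
    (hsep₁ : ∀ b a' b' : EuclideanSpace ℝ (Fin n), b ∈ B → a' ∈ projSet A b →
      b' ∈ projSet B a' → b ∈ U → a' ∈ U → b' ∈ U →
      ⟪b - a', b' - a'⟫ ≤ (1 - γ) * ‖b - a'‖ * ‖b' - a'‖)
    (hsep₂ : ∀ a b a' : EuclideanSpace ℝ (Fin n), a ∈ A → b ∈ projSet B a →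
      a' ∈ projSet A b → a ∈ U → b ∈ U → a' ∈ U →
      ⟪a - b, a' - b⟫ ≤ (1 - γ) * ‖a - b‖ * ‖a' - b‖)
    (hreg : HolderRegular A B xs 0 c) :
    ∃ V ∈ nhds xs, ∀ a b : ℕ → EuclideanSpace ℝ (Fin n),
      (∀ k, b k ∈ projSet B (a k)) → (∀ k, a (k + 1) ∈ projSet A (b k)) →
      (∃ k, a k ∈ V ∨ b k ∈ V) →
      ∃ p ∈ A ∩ B, Filter.Tendsto b Filter.atTop (nhds p) ∧
        ∃ C : ℝ, 0 < C ∧ ∃ q : ℝ, 0 < q ∧ q < 1 ∧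
          ∀ k : ℕ, ‖b k - p‖ ≤ C * q ^ k :=
  stmt16_general A B hAc hBc xs hxs γ c hγ hc hcγ U hU hsep₁ hreg
end
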